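/- arXiv:2412.03971 — 2 statements merged into one kernel-verified Lean document; each statement's English description precedes it below -/
import Mathlib

section
/- Let m, n, r ≥ 1 be integers, and let P_3 be the finite poset whose elements are the cells {(1,j) : m ≤ j ≤ n+r+m−1} ∪ {(2,j) : 1 ≤ j ≤ n+m−1} ∪ {(3,j) : 1 ≤ j ≤ m}, partially ordered componentwise: (i,j) ≤ (i′,j′) iff i ≤ i′ and j ≤ j′. Then the number of linear extensions of P_3 is e(P_3) = (2n+2m+r−1)! · ( n / (m!·(n+r)!·(m+n)!) − (n+r+1) / (m!·(n−1)!·(m+n+r+1)!) ). -/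
/-- The cells `(i, j)` (row `i`, 0-indexed; column `j`, 1-indexed) with `i < R` and
`lo i < j ≤ hi i`, partially ordered componentwise. -/
abbrev SkewCells (R : ℕ) (lo hi : ℕ → ℕ) : Type :=
  {c : ℕ × ℕ // c.1 < R ∧ lo c.1 < c.2 ∧ c.2 ≤ hi c.1}

noncomputable def gg (k : ℤ) : ℚ := if 0 ≤ k then ((k.toNat.factorial : ℚ))⁻¹ else 0

lemma gg_neg {k : ℤ} (h : k < 0) : gg k = 0 := by simp [gg, not_le.mpr h]

lemma gg_step (k : ℤ) : gg (k - 1) = (k : ℚ) * gg k := by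
  rcases lt_trichotomy k 0 with h | h | h
  · rw [gg_neg h, gg_neg (by omega), mul_zero]
  · subst h; rw [gg_neg (by omega)]; simp
  · have h0 : (0:ℤ) ≤ k - 1 := by omega
    have h1 : (0:ℤ) ≤ k := by omega
    rw [gg, gg, if_pos h0, if_pos h1]
    have hk : k.toNat = (k-1).toNat + 1 := by omega
    rw [hk, Nat.factorial_succ]
    have hne : (((k-1).toNat.factorial : ℚ)) ≠ 0 := Nat.cast_ne_zero.mpr (Nat.factorial_ne_zero _)
    have hkq : (((k - 1).toNat : ℚ) + 1) = (k : ℚ) := by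
      have : (((k-1).toNat : ℤ) : ℚ) = ((k - 1 : ℤ) : ℚ) := by rw [Int.toNat_of_nonneg h0]
      push_cast at this ⊢; linarith
    push_cast
    rw [mul_inv, hkq]
    field_simp

noncomputable def DD (a b c μ : ℤ) : ℚ :=
    gg (a - μ) * (gg b * gg c - gg (b+1) * gg (c-1))
  - gg (a+1) * (gg (b - μ - 1) * gg c - gg (b+1) * gg (c - μ - 2))
  + gg (a+2) * (gg (b - μ - 1) * gg (c-1) - gg b * gg (c - μ - 2))

lemma DD_rec (a b c μ : ℤ) :
    DD (a-1) b c μ + DD a (b-1) c μ + DD a b (c-1) μ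
      = ((a + b + c - μ : ℤ) : ℚ) * DD a b c μ := by
  have ha0 : gg (a-1-μ) = ((a - μ : ℤ) : ℚ) * gg (a-μ) := by
    rw [← gg_step]; congr 1; ring
  have ha1 : gg (a-1+1) = ((a+1 : ℤ) : ℚ) * gg (a+1) := by
    rw [← gg_step]; congr 1; ring
  have ha2 : gg (a-1+2) = ((a+2 : ℤ) : ℚ) * gg (a+2) := by
    rw [← gg_step]; congr 1; ring
  have hb0 : gg (b-1-μ-1) = ((b-μ-1 : ℤ) : ℚ) * gg (b-μ-1) := by
    rw [← gg_step]; congr 1; ring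
  have hb1 : gg (b-1+1) = ((b+1 : ℤ) : ℚ) * gg (b+1) := by
    rw [← gg_step]; congr 1; ring
  have hb1' : gg (b-1) = ((b : ℤ) : ℚ) * gg b := gg_step b
  have hc0 : gg (c-1-μ-2) = ((c-μ-2 : ℤ) : ℚ) * gg (c-μ-2) := by
    rw [← gg_step]; congr 1; ring
  have hc1 : gg (c-1-1) = ((c-1 : ℤ) : ℚ) * gg (c-1) := gg_step (c-1)
  have ha2' : gg (a+1) = ((a+2 : ℤ) : ℚ) * gg (a+2) := by
    rw [← gg_step]; congr 1; ring
  have hb2' : gg b = ((b+1 : ℤ) : ℚ) * gg (b+1) := by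
    rw [← gg_step]; congr 1; ring
  have hc2' : gg (c-1) = ((c : ℤ) : ℚ) * gg c := gg_step c
  unfold DD
  simp only [ha0, ha1, ha2, hb0, hb1, hb1', hc0, hc1, ha2', hb2', hc2']
  push_cast
  ring

lemma DD_row1_eq (b c μ : ℤ) : DD (b-1) b c μ = 0 := by
  unfold DD
  rw [show b-1-μ = b-μ-1 by ring, show b-1+1 = b by ring, show b-1+2 = b+1 by ring]
  ring

lemma DD_row2_eq (a c μ : ℤ) : DD a (c-1) c μ = 0 := by
  unfold DD
  rw [show c-1-μ-1 = c-μ-2 by ring, show c-1+1 = c by ring]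
  ring

lemma DD_row3_zero (a b μ : ℤ) (hμ : -3 < μ) : DD a b (-1) μ = 0 := by
  unfold DD
  rw [show (-1 : ℤ)-1 = -2 by ring,
      gg_neg (show (-1:ℤ)-μ-2 < 0 by omega), gg_neg (show (-2:ℤ) < 0 by omega),
      gg_neg (show (-1:ℤ) < 0 by omega)]
  ring

lemma DD_col1_zero (b c μ : ℤ) (hb : b ≤ μ) (hc : c ≤ μ + 1) : DD (μ-1) b c μ = 0 := by
  unfold DD
  rw [show μ-1-μ = (-1:ℤ) by ring,
      gg_neg (show (-1:ℤ) < 0 by omega), gg_neg (show b-μ-1 < 0 by omega),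
      gg_neg (show c-μ-2 < 0 by omega)]
  ring


section Remove

variable {R N i0 : ℕ} {lo hi hi' : ℕ → ℕ}

def SkewCells.incl
    (hmem : ∀ i j, i < R → lo i < j → ((j ≤ hi i ∧ (i, j) ≠ (i0, hi i0)) ↔ j ≤ hi' i))
    (x : SkewCells R lo hi') : SkewCells R lo hi :=
  ⟨x.1, x.2.1, x.2.2.1, ((hmem _ _ x.2.1 x.2.2.1).mpr x.2.2.2).1⟩

lemma SkewCells.incl_ne
    (hmem : ∀ i j, i < R → lo i < j → ((j ≤ hi i ∧ (i, j) ≠ (i0, hi i0)) ↔ j ≤ hi' i))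
    (x : SkewCells R lo hi') : x.1 ≠ (i0, hi i0) :=
  ((hmem _ _ x.2.1 x.2.2.1).mpr x.2.2.2).2

def SkewCells.down
    (hmem : ∀ i j, i < R → lo i < j → ((j ≤ hi i ∧ (i, j) ≠ (i0, hi i0)) ↔ j ≤ hi' i))
    (x : SkewCells R lo hi) (hx : x.1 ≠ (i0, hi i0)) : SkewCells R lo hi' :=
  ⟨x.1, x.2.1, x.2.2.1, (hmem _ _ x.2.1 x.2.2.1).mp ⟨x.2.2.2, hx⟩⟩

/-- the forward equiv -/
def fwd (hmem : ∀ i j, i < R → lo i < j → ((j ≤ hi i ∧ (i, j) ≠ (i0, hi i0)) ↔ j ≤ hi' i))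
    (f : SkewCells R lo hi ≃ Fin (N+1))
    (htop : (f.symm (Fin.last N)).1 = (i0, hi i0)) :
    SkewCells R lo hi' ≃ Fin N where
  toFun x := ⟨(f (SkewCells.incl hmem x)).1, by
    have h1 : f (SkewCells.incl hmem x) ≠ Fin.last N := by
      intro h
      have h2 := congrArg (fun z => (f.symm z).1) h
      simp only [Equiv.symm_apply_apply] at h2
      rw [htop] at h2
      exact SkewCells.incl_ne hmem x h2
    have h2 : (f (SkewCells.incl hmem x)).1 ≠ N := fun h => h1 (Fin.ext h)
    have h3 := (f (SkewCells.incl hmem x)).2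
    omega⟩
  invFun y := SkewCells.down hmem (f.symm ⟨y.1, Nat.lt_succ_of_lt y.2⟩) (by
    intro h
    have h2 : f.symm ⟨y.1, Nat.lt_succ_of_lt y.2⟩ = f.symm (Fin.last N) := by
      apply Subtype.ext
      rw [htop]; exact h
    have h3 := congrArg Fin.val (f.symm.injective h2)
    simp only [Fin.val_last] at h3
    exact absurd h3 (by have := y.2; omega))
  left_inv x := by
    apply Subtype.ext
    show (f.symm _).1 = x.1
    rw [show (⟨(f (SkewCells.incl hmem x)).1, _⟩ : Fin (N+1)) = f (SkewCells.incl hmem x)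
          from Fin.ext rfl,
        Equiv.symm_apply_apply]
    rfl
  right_inv y := by
    apply Fin.ext
    show (f (SkewCells.incl hmem (SkewCells.down hmem _ _))).1 = y.1
    rw [show SkewCells.incl hmem (SkewCells.down hmem (f.symm ⟨y.1, Nat.lt_succ_of_lt y.2⟩) _)
          = f.symm ⟨y.1, Nat.lt_succ_of_lt y.2⟩ from Subtype.ext rfl,
        Equiv.apply_symm_apply]

lemma fwd_mono (hmem : ∀ i j, i < R → lo i < j → ((j ≤ hi i ∧ (i, j) ≠ (i0, hi i0)) ↔ j ≤ hi' i))
    (f : SkewCells R lo hi ≃ Fin (N+1)) (hf : Monotone ⇑f)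
    (htop : (f.symm (Fin.last N)).1 = (i0, hi i0)) :
    Monotone ⇑(fwd hmem f htop) := by
  intro x y hxy
  show (_ : Fin N) ≤ _
  rw [Fin.mk_le_mk]
  exact hf (show SkewCells.incl hmem x ≤ SkewCells.incl hmem y from hxy)

/-- the backward equiv -/
def bwd (hi0R : i0 < R) (hcell : lo i0 < hi i0)
    (hmem : ∀ i j, i < R → lo i < j → ((j ≤ hi i ∧ (i, j) ≠ (i0, hi i0)) ↔ j ≤ hi' i))
    (g : SkewCells R lo hi' ≃ Fin N) :
    SkewCells R lo hi ≃ Fin (N+1) where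
  toFun x := if h : x.1 = (i0, hi i0) then Fin.last N
    else Fin.castSucc (g (SkewCells.down hmem x h))
  invFun y := if h : (y : ℕ) = N then ⟨(i0, hi i0), hi0R, hcell, le_rfl⟩
    else SkewCells.incl hmem (g.symm ⟨y.1, by have := y.2; omega⟩)
  left_inv x := by
    dsimp only
    by_cases h : x.1 = (i0, hi i0)
    · rw [dif_pos h]
      simp only [Fin.val_last, dif_pos]
      exact (Subtype.ext h).symm
    · rw [dif_neg h]
      have hlt : (Fin.castSucc (g (SkewCells.down hmem x h)) : ℕ) ≠ N := by
        have := (g (SkewCells.down hmem x h)).2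
        simp only [Fin.coe_castSucc]
        omega
      rw [dif_neg hlt]
      apply Subtype.ext
      show (g.symm _).1 = x.1
      rw [show (⟨(Fin.castSucc (g (SkewCells.down hmem x h)) : ℕ), _⟩ : Fin N)
            = g (SkewCells.down hmem x h) from Fin.ext rfl,
          Equiv.symm_apply_apply]
      rfl
  right_inv y := by
    dsimp only
    by_cases h : (y : ℕ) = N
    · rw [dif_pos h, dif_pos rfl]
      exact Fin.ext (by simp [h.symm])
    · rw [dif_neg h]
      have hne : (SkewCells.incl hmem (g.symm ⟨y.1, by have := y.2; omega⟩)).1 ≠ (i0, hi i0) :=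
        SkewCells.incl_ne hmem _
      rw [dif_neg hne]
      apply Fin.ext
      show ((g (SkewCells.down hmem _ _)) : ℕ) = (y : ℕ)
      rw [show SkewCells.down hmem (SkewCells.incl hmem (g.symm ⟨y.1, by have := y.2; omega⟩)) hne
            = g.symm ⟨y.1, by have := y.2; omega⟩ from Subtype.ext rfl,
          Equiv.apply_symm_apply]
  
lemma bwd_mono (hi0R : i0 < R) (hcell : lo i0 < hi i0)
    (hmax : ∀ y : SkewCells R lo hi, ((i0, hi i0) : ℕ × ℕ) ≤ y.1 → y.1 = (i0, hi i0))
    (hmem : ∀ i j, i < R → lo i < j → ((j ≤ hi i ∧ (i, j) ≠ (i0, hi i0)) ↔ j ≤ hi' i))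
    (g : SkewCells R lo hi' ≃ Fin N) (hg : Monotone ⇑g) :
    Monotone ⇑(bwd hi0R hcell hmem g) := by
  intro x y hxy
  show (if h : x.1 = _ then _ else _) ≤ (if h : y.1 = _ then _ else _)
  by_cases hy : y.1 = (i0, hi i0)
  · rw [dif_pos hy]; exact Fin.le_last _
  · by_cases hx : x.1 = (i0, hi i0)
    · exfalso
      apply hy
      apply hmax
      rw [← hx]
      exact hxy
    · rw [dif_neg hx, dif_neg hy]
      rw [Fin.castSucc_le_castSucc_iff]
      exact hg (show SkewCells.down hmem x hx ≤ SkewCells.down hmem y hy from hxy)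

lemma bwd_top (hi0R : i0 < R) (hcell : lo i0 < hi i0)
    (hmem : ∀ i j, i < R → lo i < j → ((j ≤ hi i ∧ (i, j) ≠ (i0, hi i0)) ↔ j ≤ hi' i))
    (g : SkewCells R lo hi' ≃ Fin N) :
    (bwd hi0R hcell hmem g).symm (Fin.last N) = ⟨(i0, hi i0), hi0R, hcell, le_rfl⟩ := by
  show (if h : ((Fin.last N : Fin (N+1)) : ℕ) = N then _ else _) = _
  rw [dif_pos (Fin.val_last N)]

theorem card_remove
    (hi0R : i0 < R) (hcell : lo i0 < hi i0)
    (hmax : ∀ y : SkewCells R lo hi, ((i0, hi i0) : ℕ × ℕ) ≤ y.1 → y.1 = (i0, hi i0))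
    (hmem : ∀ i j, i < R → lo i < j → ((j ≤ hi i ∧ (i, j) ≠ (i0, hi i0)) ↔ j ≤ hi' i)) :
    Nat.card {f : SkewCells R lo hi ≃ Fin (N+1) //
        Monotone ⇑f ∧ f.symm (Fin.last N) = ⟨(i0, hi i0), hi0R, hcell, le_rfl⟩}
      = Nat.card {f : SkewCells R lo hi' ≃ Fin N // Monotone ⇑f} := by
  apply Nat.card_congr
  refine
    { toFun := fun fp => ⟨fwd hmem fp.1 (by rw [fp.2.2]), fwd_mono hmem fp.1 fp.2.1 _⟩,
      invFun := fun gp => ⟨bwd hi0R hcell hmem gp.1,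
        bwd_mono hi0R hcell hmax hmem gp.1 gp.2, bwd_top hi0R hcell hmem gp.1⟩,
      left_inv := ?_, right_inv := ?_ }
  · rintro ⟨f, hf, htop⟩
    apply Subtype.ext
    apply Equiv.ext
    intro x
    show (if h : x.1 = (i0, hi i0) then Fin.last N else _) = f x
    by_cases h : x.1 = (i0, hi i0)
    · rw [dif_pos h]
      have : x = f.symm (Fin.last N) := by
        apply Subtype.ext; rw [htop]; exact h
      rw [this, Equiv.apply_symm_apply]
    · rw [dif_neg h]
      apply Fin.ext
      show (f (SkewCells.incl hmem (SkewCells.down hmem x h))).1 = (f x : ℕ)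
      rw [show SkewCells.incl hmem (SkewCells.down hmem x h) = x from Subtype.ext rfl]
  · rintro ⟨g, hg⟩
    apply Subtype.ext
    apply Equiv.ext
    intro x
    apply Fin.ext
    show ((bwd hi0R hcell hmem g) (SkewCells.incl hmem x) : ℕ) = (g x : ℕ)
    unfold bwd
    dsimp only [Equiv.coe_fn_mk]
    rw [dif_neg (show ¬(SkewCells.incl hmem x).1 = (i0, hi i0) from SkewCells.incl_ne hmem x)]
    rw [show SkewCells.down hmem (SkewCells.incl hmem x) (SkewCells.incl_ne hmem x)
          = x from Subtype.ext rfl]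
    rfl

end Remove

section Shape

/-- left boundary -/
def slo (μ : ℕ) : ℕ → ℕ
  | 0 => μ
  | _ + 1 => 0

/-- right boundary -/
def shi (a b c : ℕ) : ℕ → ℕ
  | 0 => a
  | 1 => b
  | _ + 2 => c

noncomputable def EE (NN a b c μ : ℕ) : ℕ :=
  Nat.card {f : SkewCells 3 (slo μ) (shi a b c) ≃ Fin NN // Monotone ⇑f}

lemma top_max {α : Type*} [PartialOrder α] {N : ℕ} (f : α ≃ Fin (N+1)) (hf : Monotone ⇑f)
    {y : α} (h : f.symm (Fin.last N) ≤ y) : y = f.symm (Fin.last N) := by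
  have h1 := hf h
  rw [Equiv.apply_symm_apply] at h1
  have h2 : f y = Fin.last N := le_antisymm (Fin.le_last _) h1
  rw [← h2, Equiv.symm_apply_apply]

variable {N a b c μ : ℕ}

lemma top0 (hba : b ≤ a) (hcb : c ≤ b)
    (f : SkewCells 3 (slo μ) (shi a b c) ≃ Fin (N+1)) (hf : Monotone ⇑f)
    (h : (f.symm (Fin.last N)).1.1 = 0) :
    (f.symm (Fin.last N)).1 = (0, a) ∧ μ < a ∧ b < a := by
  set x := f.symm (Fin.last N) with hxdef
  have hja : x.1.2 ≤ a := by have t := x.2.2.2; rw [h] at t; exact t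
  have hlo : μ < x.1.2 := by have t := x.2.2.1; rw [h] at t; exact t
  have hcol : x.1.2 = a := by
    by_contra hne
    have hja' : x.1.2 < a := lt_of_le_of_ne hja hne
    have hy : ((0 : ℕ), x.1.2 + 1).1 < 3 ∧ slo μ ((0:ℕ), x.1.2+1).1 < ((0:ℕ), x.1.2+1).2
        ∧ ((0:ℕ), x.1.2+1).2 ≤ shi a b c ((0:ℕ), x.1.2+1).1 :=
      ⟨by omega, by show μ < x.1.2 + 1; omega, by show x.1.2 + 1 ≤ a; omega⟩
    have hle : x ≤ (⟨((0:ℕ), x.1.2+1), hy⟩ : SkewCells 3 (slo μ) (shi a b c)) := by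
      show x.1 ≤ _
      rw [Prod.le_def]
      dsimp only
      exact ⟨by omega, by omega⟩
    have := top_max f hf hle
    rw [← hxdef] at this
    have := congrArg (fun z => z.1.2) this
    simp only at this
    omega
  have hb : b < a := by
    by_contra hab
    have hab' : a ≤ b := by omega
    have hy : ((1 : ℕ), a).1 < 3 ∧ slo μ ((1:ℕ), a).1 < ((1:ℕ), a).2
        ∧ ((1:ℕ), a).2 ≤ shi a b c ((1:ℕ), a).1 :=
      ⟨by omega, by show 0 < a; omega, by show a ≤ b; omega⟩
    have hle : x ≤ (⟨((1:ℕ), a), hy⟩ : SkewCells 3 (slo μ) (shi a b c)) := by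
      show x.1 ≤ _
      rw [Prod.le_def]
      dsimp only
      exact ⟨by omega, by omega⟩
    have := top_max f hf hle
    rw [← hxdef] at this
    have := congrArg (fun z => z.1.1) this
    simp only at this
    omega
  exact ⟨by rw [Prod.ext_iff]; exact ⟨h, hcol⟩, by omega, hb⟩

lemma top1 (hcb : c ≤ b)
    (f : SkewCells 3 (slo μ) (shi a b c) ≃ Fin (N+1)) (hf : Monotone ⇑f)
    (h : (f.symm (Fin.last N)).1.1 = 1) :
    (f.symm (Fin.last N)).1 = (1, b) ∧ c < b := by
  set x := f.symm (Fin.last N) with hxdef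
  have hja : x.1.2 ≤ b := by have t := x.2.2.2; rw [h] at t; exact t
  have hlo : 0 < x.1.2 := by have t := x.2.2.1; rw [h] at t; exact t
  have hcol : x.1.2 = b := by
    by_contra hne
    have hja' : x.1.2 < b := lt_of_le_of_ne hja hne
    have hy : ((1 : ℕ), x.1.2 + 1).1 < 3 ∧ slo μ ((1:ℕ), x.1.2+1).1 < ((1:ℕ), x.1.2+1).2
        ∧ ((1:ℕ), x.1.2+1).2 ≤ shi a b c ((1:ℕ), x.1.2+1).1 :=
      ⟨by omega, by show 0 < x.1.2 + 1; omega, by show x.1.2 + 1 ≤ b; omega⟩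
    have hle : x ≤ (⟨((1:ℕ), x.1.2+1), hy⟩ : SkewCells 3 (slo μ) (shi a b c)) := by
      show x.1 ≤ _
      rw [Prod.le_def]
      dsimp only
      exact ⟨by omega, by omega⟩
    have := top_max f hf hle
    rw [← hxdef] at this
    have := congrArg (fun z => z.1.2) this
    simp only at this
    omega
  have hcbs : c < b := by
    by_contra hab
    have hab' : b ≤ c := by omega
    have hy : ((2 : ℕ), b).1 < 3 ∧ slo μ ((2:ℕ), b).1 < ((2:ℕ), b).2
        ∧ ((2:ℕ), b).2 ≤ shi a b c ((2:ℕ), b).1 :=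
      ⟨by omega, by show 0 < b; omega, by show b ≤ c; omega⟩
    have hle : x ≤ (⟨((2:ℕ), b), hy⟩ : SkewCells 3 (slo μ) (shi a b c)) := by
      show x.1 ≤ _
      rw [Prod.le_def]
      dsimp only
      exact ⟨by omega, by omega⟩
    have := top_max f hf hle
    rw [← hxdef] at this
    have := congrArg (fun z => z.1.1) this
    simp only at this
    omega
  exact ⟨by rw [Prod.ext_iff]; exact ⟨h, hcol⟩, hcbs⟩

lemma top2
    (f : SkewCells 3 (slo μ) (shi a b c) ≃ Fin (N+1)) (hf : Monotone ⇑f)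
    (h : (f.symm (Fin.last N)).1.1 = 2) :
    (f.symm (Fin.last N)).1 = (2, c) ∧ 0 < c := by
  set x := f.symm (Fin.last N) with hxdef
  have hja : x.1.2 ≤ c := by have t := x.2.2.2; rw [h] at t; exact t
  have hlo : 0 < x.1.2 := by have t := x.2.2.1; rw [h] at t; exact t
  have hcol : x.1.2 = c := by
    by_contra hne
    have hja' : x.1.2 < c := lt_of_le_of_ne hja hne
    have hy : ((2 : ℕ), x.1.2 + 1).1 < 3 ∧ slo μ ((2:ℕ), x.1.2+1).1 < ((2:ℕ), x.1.2+1).2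
        ∧ ((2:ℕ), x.1.2+1).2 ≤ shi a b c ((2:ℕ), x.1.2+1).1 :=
      ⟨by omega, by show 0 < x.1.2 + 1; omega, by show x.1.2 + 1 ≤ c; omega⟩
    have hle : x ≤ (⟨((2:ℕ), x.1.2+1), hy⟩ : SkewCells 3 (slo μ) (shi a b c)) := by
      show x.1 ≤ _
      rw [Prod.le_def]
      dsimp only
      exact ⟨by omega, by omega⟩
    have := top_max f hf hle
    rw [← hxdef] at this
    have := congrArg (fun z => z.1.2) this
    simp only at this
    omega
  exact ⟨by rw [Prod.ext_iff]; exact ⟨h, hcol⟩, by omega⟩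

end Shape

section Fibers

variable {N a b c μ : ℕ}

lemma fiber0_card (hba : b ≤ a) (hcb : c ≤ b) :
    Nat.card {fp : {f : SkewCells 3 (slo μ) (shi a b c) ≃ Fin (N+1) // Monotone ⇑f} //
      (fp.1.symm (Fin.last N)).1.1 = 0}
    = if μ < a ∧ b < a then EE N (a-1) b c μ else 0 := by
  split_ifs with hc
  · obtain ⟨hμa, hb⟩ := hc
    have hmax : ∀ y : SkewCells 3 (slo μ) (shi a b c),
        (((0:ℕ), shi a b c 0) : ℕ × ℕ) ≤ y.1 → y.1 = ((0:ℕ), shi a b c 0) := by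
      rintro ⟨⟨i, j⟩, h3, hl, hh⟩ hy
      rw [Prod.le_def] at hy
      obtain ⟨hy1, hy2⟩ := hy
      dsimp only at hy1 hy2 ⊢
      rcases i with _ | _ | _ | i
      · simp only [shi, slo] at hl hh hy2 ⊢
        rw [Prod.ext_iff]
        exact ⟨rfl, by omega⟩
      · simp only [shi, slo] at hl hh hy2 ⊢
        omega
      · simp only [shi, slo] at hl hh hy2 ⊢
        omega
      · omega
    have hmem : ∀ i j, i < 3 → slo μ i < j →
        ((j ≤ shi a b c i ∧ (i, j) ≠ ((0:ℕ), shi a b c 0)) ↔ j ≤ shi (a-1) b c i) := by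
      intro i j h3 hl
      rcases i with _ | _ | _ | i
      · simp only [shi, slo, ne_eq, Prod.mk.injEq, true_and] at hl ⊢
        omega
      · simp only [shi, slo, ne_eq, Prod.mk.injEq] at hl ⊢
        omega
      · simp only [shi, slo, ne_eq, Prod.mk.injEq] at hl ⊢
        omega
      · omega
    have hEE : EE N (a-1) b c μ
        = Nat.card {f : SkewCells 3 (slo μ) (shi (a-1) b c) ≃ Fin N // Monotone ⇑f} := rfl
    rw [hEE, ← card_remove (N := N) (i0 := 0) (hi' := shi (a-1) b c)
        (by omega) (show slo μ 0 < shi a b c 0 from hμa) hmax hmem]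
    apply Nat.card_congr
    refine (Equiv.subtypeSubtypeEquivSubtypeInter
        (fun f : SkewCells 3 (slo μ) (shi a b c) ≃ Fin (N+1) => Monotone ⇑f)
        (fun f => (f.symm (Fin.last N)).1.1 = 0)).trans (Equiv.subtypeEquivRight ?_)
    intro f
    constructor
    · rintro ⟨hf, h0⟩
      refine ⟨hf, Subtype.ext ?_⟩
      rw [(top0 hba hcb f hf h0).1]
      rfl
    · rintro ⟨hf, htop⟩
      rw [htop]
      exact ⟨hf, rfl⟩
  · have : IsEmpty {fp : {f : SkewCells 3 (slo μ) (shi a b c) ≃ Fin (N+1) // Monotone ⇑f} //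
        (fp.1.symm (Fin.last N)).1.1 = 0} := by
      constructor
      rintro ⟨⟨f, hf⟩, h0⟩
      exact hc ⟨(top0 hba hcb f hf h0).2.1, (top0 hba hcb f hf h0).2.2⟩
    exact Nat.card_of_isEmpty

lemma fiber1_card (hba : b ≤ a) (hcb : c ≤ b) :
    Nat.card {fp : {f : SkewCells 3 (slo μ) (shi a b c) ≃ Fin (N+1) // Monotone ⇑f} //
      (fp.1.symm (Fin.last N)).1.1 = 1}
    = if c < b then EE N a (b-1) c μ else 0 := by
  split_ifs with hc
  · have hmax : ∀ y : SkewCells 3 (slo μ) (shi a b c),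
        (((1:ℕ), shi a b c 1) : ℕ × ℕ) ≤ y.1 → y.1 = ((1:ℕ), shi a b c 1) := by
      rintro ⟨⟨i, j⟩, h3, hl, hh⟩ hy
      rw [Prod.le_def] at hy
      obtain ⟨hy1, hy2⟩ := hy
      dsimp only at hy1 hy2 ⊢
      rcases i with _ | _ | _ | i
      · simp only [shi, slo] at hl hh hy1 hy2 ⊢
        omega
      · simp only [shi, slo] at hl hh hy2 ⊢
        rw [Prod.ext_iff]
        exact ⟨rfl, by omega⟩
      · simp only [shi, slo] at hl hh hy2 ⊢
        omega
      · omega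
    have hmem : ∀ i j, i < 3 → slo μ i < j →
        ((j ≤ shi a b c i ∧ (i, j) ≠ ((1:ℕ), shi a b c 1)) ↔ j ≤ shi a (b-1) c i) := by
      intro i j h3 hl
      rcases i with _ | _ | _ | i
      · simp only [shi, slo, ne_eq, Prod.mk.injEq] at hl ⊢
        omega
      · simp only [shi, slo, ne_eq, Prod.mk.injEq, true_and] at hl ⊢
        omega
      · simp only [shi, slo, ne_eq, Prod.mk.injEq] at hl ⊢
        omega
      · omega
    have hEE : EE N a (b-1) c μ
        = Nat.card {f : SkewCells 3 (slo μ) (shi a (b-1) c) ≃ Fin N // Monotone ⇑f} := rfl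
    rw [hEE, ← card_remove (N := N) (i0 := 1) (hi' := shi a (b-1) c)
        (by omega) (show slo μ 1 < shi a b c 1 by show 0 < b; omega) hmax hmem]
    apply Nat.card_congr
    refine (Equiv.subtypeSubtypeEquivSubtypeInter
        (fun f : SkewCells 3 (slo μ) (shi a b c) ≃ Fin (N+1) => Monotone ⇑f)
        (fun f => (f.symm (Fin.last N)).1.1 = 1)).trans (Equiv.subtypeEquivRight ?_)
    intro f
    constructor
    · rintro ⟨hf, h0⟩
      refine ⟨hf, Subtype.ext ?_⟩
      rw [(top1 hcb f hf h0).1]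
      rfl
    · rintro ⟨hf, htop⟩
      rw [htop]
      exact ⟨hf, rfl⟩
  · have : IsEmpty {fp : {f : SkewCells 3 (slo μ) (shi a b c) ≃ Fin (N+1) // Monotone ⇑f} //
        (fp.1.symm (Fin.last N)).1.1 = 1} := by
      constructor
      rintro ⟨⟨f, hf⟩, h0⟩
      exact hc (top1 hcb f hf h0).2
    exact Nat.card_of_isEmpty

lemma fiber2_card (hba : b ≤ a) (hcb : c ≤ b) :
    Nat.card {fp : {f : SkewCells 3 (slo μ) (shi a b c) ≃ Fin (N+1) // Monotone ⇑f} //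
      (fp.1.symm (Fin.last N)).1.1 = 2}
    = if 0 < c then EE N a b (c-1) μ else 0 := by
  split_ifs with hc
  · have hmax : ∀ y : SkewCells 3 (slo μ) (shi a b c),
        (((2:ℕ), shi a b c 2) : ℕ × ℕ) ≤ y.1 → y.1 = ((2:ℕ), shi a b c 2) := by
      rintro ⟨⟨i, j⟩, h3, hl, hh⟩ hy
      rw [Prod.le_def] at hy
      obtain ⟨hy1, hy2⟩ := hy
      dsimp only at hy1 hy2 ⊢
      rcases i with _ | _ | _ | i
      · simp only [shi, slo] at hl hh hy1 hy2 ⊢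
        omega
      · simp only [shi, slo] at hl hh hy1 hy2 ⊢
        omega
      · simp only [shi, slo] at hl hh hy2 ⊢
        rw [Prod.ext_iff]
        exact ⟨rfl, by omega⟩
      · omega
    have hmem : ∀ i j, i < 3 → slo μ i < j →
        ((j ≤ shi a b c i ∧ (i, j) ≠ ((2:ℕ), shi a b c 2)) ↔ j ≤ shi a b (c-1) i) := by
      intro i j h3 hl
      rcases i with _ | _ | _ | i
      · simp only [shi, slo, ne_eq, Prod.mk.injEq] at hl ⊢
        omega
      · simp only [shi, slo, ne_eq, Prod.mk.injEq] at hl ⊢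
        omega
      · simp only [shi, slo, ne_eq, Prod.mk.injEq, true_and] at hl ⊢
        omega
      · omega
    have hEE : EE N a b (c-1) μ
        = Nat.card {f : SkewCells 3 (slo μ) (shi a b (c-1)) ≃ Fin N // Monotone ⇑f} := rfl
    rw [hEE, ← card_remove (N := N) (i0 := 2) (hi' := shi a b (c-1))
        (by omega) (show slo μ 2 < shi a b c 2 by show 0 < c; omega) hmax hmem]
    apply Nat.card_congr
    refine (Equiv.subtypeSubtypeEquivSubtypeInter
        (fun f : SkewCells 3 (slo μ) (shi a b c) ≃ Fin (N+1) => Monotone ⇑f)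
        (fun f => (f.symm (Fin.last N)).1.1 = 2)).trans (Equiv.subtypeEquivRight ?_)
    intro f
    constructor
    · rintro ⟨hf, h0⟩
      refine ⟨hf, Subtype.ext ?_⟩
      rw [(top2 f hf h0).1]
      rfl
    · rintro ⟨hf, htop⟩
      rw [htop]
      exact ⟨hf, rfl⟩
  · have : IsEmpty {fp : {f : SkewCells 3 (slo μ) (shi a b c) ≃ Fin (N+1) // Monotone ⇑f} //
        (fp.1.symm (Fin.last N)).1.1 = 2} := by
      constructor
      rintro ⟨⟨f, hf⟩, h0⟩
      exact hc (top2 f hf h0).2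
    exact Nat.card_of_isEmpty

end Fibers

lemma card_three_split {α : Type*} [Finite α] (φ : α → ℕ) (hφ : ∀ x, φ x < 3) :
    Nat.card α = Nat.card {x // φ x = 0}
      + (Nat.card {x // φ x = 1} + Nat.card {x // φ x = 2}) := by
  classical
  rw [← Nat.card_sum, ← Nat.card_sum]
  apply Nat.card_congr
  refine
    { toFun := fun x => if h : φ x = 0 then Sum.inl ⟨x, h⟩
        else if h1 : φ x = 1 then Sum.inr (Sum.inl ⟨x, h1⟩)
        else Sum.inr (Sum.inr ⟨x, by have := hφ x; omega⟩),
      invFun := fun z => Sum.elim Subtype.val (Sum.elim Subtype.val Subtype.val) z,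
      left_inv := fun x => by
        dsimp only
        by_cases h : φ x = 0
        · rw [dif_pos h]; rfl
        · rw [dif_neg h]
          by_cases h1 : φ x = 1
          · rw [dif_pos h1]; rfl
          · rw [dif_neg h1]; rfl,
      right_inv := fun z => by
        dsimp only
        rcases z with ⟨x, hx⟩ | (⟨x, hx⟩ | ⟨x, hx⟩)
        · simp only [Sum.elim_inl]
          exact dif_pos hx
        · simp only [Sum.elim_inr, Sum.elim_inl]
          exact (dif_neg (show ¬φ x = 0 by omega)).trans (dif_pos hx)
        · have := hφ x
          simp only [Sum.elim_inr]
          exact (dif_neg (show ¬φ x = 0 by omega)).trans (dif_neg (show ¬φ x = 1 by omega)) }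

lemma EE_rec (hba : b ≤ a) (hcb : c ≤ b) (hμ : μ ≤ a) :
    EE (N+1) a b c μ
      = (if μ < a ∧ b < a then EE N (a-1) b c μ else 0)
      + ((if c < b then EE N a (b-1) c μ else 0)
      + (if 0 < c then EE N a b (c-1) μ else 0)) := by
  rw [show EE (N+1) a b c μ
      = Nat.card {f : SkewCells 3 (slo μ) (shi a b c) ≃ Fin (N+1) // Monotone ⇑f} from rfl]
  rw [card_three_split (fun fp => (fp.1.symm (Fin.last N)).1.1)
      (fun fp => (fp.1.symm (Fin.last N)).2.1)]
  rw [fiber0_card hba hcb, fiber1_card hba hcb, fiber2_card hba hcb]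

lemma DD_base (μ : ℕ) : DD (μ:ℤ) 0 0 (μ:ℤ) = 1 := by
  unfold DD
  rw [show (μ:ℤ) - μ = 0 by ring,
      gg_neg (show (0:ℤ) - μ - 1 < 0 by have := Int.natCast_nonneg μ; omega),
      gg_neg (show (0:ℤ) - μ - 2 < 0 by have := Int.natCast_nonneg μ; omega),
      gg_neg (show (0:ℤ) - 1 < 0 by omega)]
  have h0 : gg 0 = 1 := by simp [gg]
  rw [h0]
  ring

lemma EE_zero (μ : ℕ) : EE 0 μ 0 0 μ = 1 := by
  have hempty : IsEmpty (SkewCells 3 (slo μ) (shi μ 0 0)) := by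
    constructor
    rintro ⟨⟨i, j⟩, h3, hl, hh⟩
    rcases i with _ | _ | _ | i <;> simp only [slo, shi] at hl hh <;> omega
  haveI : Nonempty {f : SkewCells 3 (slo μ) (shi μ 0 0) ≃ Fin 0 // Monotone ⇑f} :=
    ⟨⟨Equiv.equivOfIsEmpty _ _, fun x _ _ => (hempty.false x).elim⟩⟩
  haveI : Subsingleton {f : SkewCells 3 (slo μ) (shi μ 0 0) ≃ Fin 0 // Monotone ⇑f} :=
    ⟨fun f g => Subtype.ext (Equiv.ext fun x => (hempty.false x).elim)⟩
  exact Nat.card_unique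

lemma EE_eq : ∀ N a b c μ : ℕ, b ≤ a → c ≤ b → μ ≤ a → a - μ + b + c = N →
    (EE N a b c μ : ℚ) = (N.factorial : ℚ) * DD (a:ℤ) (b:ℤ) (c:ℤ) (μ:ℤ) := by
  intro N
  induction N with
  | zero =>
    intro a b c μ hba hcb hμ hN
    obtain ⟨h1, rfl, rfl⟩ : a = μ ∧ b = 0 ∧ c = 0 := by omega
    subst h1
    rw [EE_zero]
    push_cast
    rw [DD_base]
    norm_num
  | succ N ih =>
    intro a b c μ hba hcb hμ hN
    rw [EE_rec hba hcb hμ]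
    push_cast [apply_ite (Nat.cast : ℕ → ℚ)]
    have h0 : ((if μ < a ∧ b < a then (EE N (a-1) b c μ : ℚ) else 0))
        = (N.factorial : ℚ) * DD ((a:ℤ)-1) (b:ℤ) (c:ℤ) (μ:ℤ) := by
      split_ifs with hcnd
      · rw [ih (a-1) b c μ (by omega) hcb (by omega) (by omega)]
        congr 2
        push_cast [Nat.cast_sub (show 1 ≤ a by omega)]
        ring
      · have hz : DD ((a:ℤ)-1) (b:ℤ) (c:ℤ) (μ:ℤ) = 0 := by
          rcases (show a = b ∨ a = μ by omega) with h | h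
          · subst h
            exact DD_row1_eq _ _ _
          · subst h
            exact DD_col1_zero _ _ _ (by exact_mod_cast hba) (by
              have h2 : (c:ℤ) ≤ (a:ℤ) := by exact_mod_cast le_trans hcb hba
              omega)
        rw [hz, mul_zero]
    have h1 : ((if c < b then (EE N a (b-1) c μ : ℚ) else 0))
        = (N.factorial : ℚ) * DD (a:ℤ) ((b:ℤ)-1) (c:ℤ) (μ:ℤ) := by
      split_ifs with hcnd
      · rw [ih a (b-1) c μ (by omega) (by omega) hμ (by omega)]
        congr 2
        push_cast [Nat.cast_sub (show 1 ≤ b by omega)]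
        ring
      · have hbc : b = c := by omega
        subst hbc
        rw [DD_row2_eq, mul_zero]
    have h2 : ((if 0 < c then (EE N a b (c-1) μ : ℚ) else 0))
        = (N.factorial : ℚ) * DD (a:ℤ) (b:ℤ) ((c:ℤ)-1) (μ:ℤ) := by
      split_ifs with hcnd
      · rw [ih a b (c-1) μ hba (by omega) hμ (by omega)]
        congr 2
        push_cast [Nat.cast_sub (show 1 ≤ c by omega)]
        ring
      · have hc0 : c = 0 := by omega
        subst hc0
        rw [show ((0:ℕ):ℤ) - 1 = -1 by norm_num,
            DD_row3_zero _ _ _ (by have := Int.natCast_nonneg μ; omega), mul_zero]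
    rw [h0, h1, h2, ← mul_add, ← mul_add, ← add_assoc, DD_rec]
    have hsum : ((a:ℤ) + b + c - μ) = ((N:ℤ) + 1) := by omega
    rw [hsum]
    push_cast [Nat.factorial_succ]
    ring

lemma gg_natCast (k : ℕ) : gg (k:ℤ) = ((k.factorial : ℚ))⁻¹ := by
  simp [gg]

set_option maxHeartbeats 1000000 in
lemma DD_eval (m n r : ℕ) (hm : 1 ≤ m) (hn : 1 ≤ n) :
    DD ((n+r+m-1 : ℕ) : ℤ) ((n+m-1 : ℕ) : ℤ) ((m : ℕ) : ℤ) ((m-1 : ℕ) : ℤ)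
      = (n : ℚ) / ((m.factorial : ℚ) * ((n + r).factorial : ℚ) * ((m + n).factorial : ℚ))
        - ((n : ℚ) + (r : ℚ) + 1) /
          ((m.factorial : ℚ) * ((n - 1).factorial : ℚ) * ((m + n + r + 1).factorial : ℚ)) := by
  obtain ⟨m1, rfl⟩ : ∃ m1, m = m1 + 1 := ⟨m - 1, by omega⟩
  obtain ⟨n1, rfl⟩ : ∃ n1, n = n1 + 1 := ⟨n - 1, by omega⟩
  rw [show n1+1+r+(m1+1)-1 = n1+r+m1+1 from by omega,
      show n1+1+(m1+1)-1 = n1+m1+1 from by omega,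
      show m1+1-1 = m1 from by omega,
      show n1+1-1 = n1 from by omega,
      show n1+1+r = n1+r+1 from by omega,
      show m1+1+(n1+1) = n1+m1+2 from by omega,
      show n1+m1+2+r+1 = n1+r+m1+3 from by omega]
  unfold DD
  rw [show ((n1+r+m1+1 : ℕ) : ℤ) - ((m1 : ℕ) : ℤ) = ((n1+r+1 : ℕ) : ℤ) from by push_cast; ring,
      show ((n1+r+m1+1 : ℕ) : ℤ) + 1 = ((n1+r+m1+2 : ℕ) : ℤ) from by push_cast; ring,
      show ((n1+r+m1+1 : ℕ) : ℤ) + 2 = ((n1+r+m1+3 : ℕ) : ℤ) from by push_cast; ring,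
      show ((n1+m1+1 : ℕ) : ℤ) - ((m1 : ℕ) : ℤ) - 1 = ((n1 : ℕ) : ℤ) from by push_cast; ring,
      show ((n1+m1+1 : ℕ) : ℤ) + 1 = ((n1+m1+2 : ℕ) : ℤ) from by push_cast; ring,
      show ((m1+1 : ℕ) : ℤ) - ((m1 : ℕ) : ℤ) - 2 = (-1 : ℤ) from by push_cast; ring,
      show ((m1+1 : ℕ) : ℤ) - 1 = ((m1 : ℕ) : ℤ) from by push_cast; ring,
      gg_neg (show (-1 : ℤ) < 0 from by norm_num)]
  simp only [gg_natCast]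
  have e1 : ((n1+m1+2).factorial : ℚ) = ((n1+m1+2 : ℕ) : ℚ) * ((n1+m1+1).factorial : ℚ) := by
    rw [show n1+m1+2 = (n1+m1+1)+1 from rfl, Nat.factorial_succ]
    push_cast; ring
  have e2 : ((m1+1).factorial : ℚ) = ((m1+1 : ℕ) : ℚ) * (m1.factorial : ℚ) := by
    rw [Nat.factorial_succ]; push_cast; ring
  have e3 : ((n1+r+m1+3).factorial : ℚ)
      = ((n1+r+m1+3 : ℕ) : ℚ) * ((n1+r+m1+2).factorial : ℚ) := by
    rw [show n1+r+m1+3 = (n1+r+m1+2)+1 from rfl, Nat.factorial_succ]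
    push_cast; ring
  have e4 : ((n1+1).factorial : ℚ) = ((n1+1 : ℕ) : ℚ) * (n1.factorial : ℚ) := by
    rw [Nat.factorial_succ]; push_cast; ring
  have f1 : (m1.factorial : ℚ) ≠ 0 := Nat.cast_ne_zero.mpr (Nat.factorial_ne_zero _)
  have f2 : (n1.factorial : ℚ) ≠ 0 := Nat.cast_ne_zero.mpr (Nat.factorial_ne_zero _)
  have f3 : ((n1+r+1).factorial : ℚ) ≠ 0 := Nat.cast_ne_zero.mpr (Nat.factorial_ne_zero _)
  have f4 : ((n1+m1+1).factorial : ℚ) ≠ 0 := Nat.cast_ne_zero.mpr (Nat.factorial_ne_zero _)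
  have f5 : ((n1+r+m1+2).factorial : ℚ) ≠ 0 := Nat.cast_ne_zero.mpr (Nat.factorial_ne_zero _)
  rw [e1, e2, e3]
  field_simp
  push_cast
  ring

/-- The cell poset of the skew shape `(n+r+m-1, n+m-1, m)/(m-1)` has exactly
`(2n+2m+r-1)! (n/(m! (n+r)! (m+n)!) - (n+r+1)/(m! (n-1)! (m+n+r+1)!))` linear extensions. -/
theorem stmt_14 (m n r : ℕ) (hm : 1 ≤ m) (hn : 1 ≤ n) (hr : 1 ≤ r) :
    (Nat.card {f : SkewCells 3 (fun i => if i = 0 then m - 1 else 0)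
        (fun i => if i = 0 then n + r + m - 1 else if i = 1 then n + m - 1 else m)
        ≃ Fin (2 * n + 2 * m + r - 1) // Monotone ⇑f} : ℚ)
      = ((2 * n + 2 * m + r - 1).factorial : ℚ) *
          ((n : ℚ) / ((m.factorial : ℚ) * ((n + r).factorial : ℚ) * ((m + n).factorial : ℚ))
            - ((n : ℚ) + (r : ℚ) + 1) /
              ((m.factorial : ℚ) * ((n - 1).factorial : ℚ) * ((m + n + r + 1).factorial : ℚ))) := by
  have hlo : (fun i => if i = 0 then m - 1 else 0) = slo (m-1) := by
    funext i; rcases i with _ | i <;> rfl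
  have hhi : (fun i => if i = 0 then n + r + m - 1 else if i = 1 then n + m - 1 else m)
      = shi (n+r+m-1) (n+m-1) m := by
    funext i; rcases i with _ | _ | i <;> rfl
  rw [hlo, hhi]
  rw [show (Nat.card {f : SkewCells 3 (slo (m-1)) (shi (n+r+m-1) (n+m-1) m)
        ≃ Fin (2*n+2*m+r-1) // Monotone ⇑f})
      = EE (2*n+2*m+r-1) (n+r+m-1) (n+m-1) m (m-1) from rfl]
  rw [EE_eq _ _ _ _ _ (by omega) (by omega) (by omega) (by omega)]
  rw [DD_eval m n r hm hn]
end

section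
/- Let m, n ≥ 1 be integers. Let G ∈ ℤ⟦q⟧ be the formal power series whose coefficient of q^N is the number of tuples of nonnegative integers (u_1, u_2, u_3, u_4, A_1, …, A_{n−1}, E_1, …, E_n, C_1, …, C_{m−1}, D_1, …, D_m) satisfying: u_1 ≥ u_2, u_1 ≥ u_3, u_2 ≥ u_4, u_3 ≥ u_4; A_{n−1} ≥ ⋯ ≥ A_1 ≥ u_2; E_n ≥ ⋯ ≥ E_1 ≥ u_4; u_2 ≥ E_1; A_t ≥ E_{t+1} for 1 ≤ t ≤ n−1; C_{m−1} ≥ ⋯ ≥ C_1 ≥ u_1; D_m ≥ ⋯ ≥ D_1 ≥ u_3; u_1 ≥ D_1; C_t ≥ D_{t+1} for 1 ≤ t ≤ m−1; and total sum of all entries equal to N. Then in ℤ⟦q⟧ (where every series 1−q^s with s ≥ 1 and every (q;q)_s are invertible): G = ((q;q)_n (q;q)_{n−1} (q;q)_m (q;q)_{m−1})^{-1} · (T_1 + T_2), where T_1 = [ (1−q^{3m+n+1})(1−q^{m+1})(1−q^{m+n+1}) − q(1−q^{3m+n+2})(1−q^m)(1−q^{m+n}) ] · [ (1−q^m)(1−q^{m+1})(1−q^{m+n})(1−q^{m+n+1})(1−q^{2m+1})(1−q^{2m+n+1})(1−q^{2m+2n+2})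 ]^{-1} and T_2 = [ q^2(1−q^{3m+n+3})(1−q^m)(1−q^{m+n+1}) − q(1−q^{3m+n+2})(1−q^{m+1})(1−q^{m+n+2}) ] · [ (1−q^m)(1−q^{m+1})(1−q^{m+n+1})(1−q^{m+n+2})(1−q^{2m+1})(1−q^{2m+n+2})(1−q^{2m+2n+2}) ]^{-1}. -/
open PowerSeries

/-- The q-shifted factorial `(q;q)_s = ∏_{i=1}^{s} (1 - q^i)` in `ℤ⟦q⟧`. -/
noncomputable def qqPoch (s : ℕ) : PowerSeries ℤ :=
  ∏ i ∈ Finset.range s, (1 - PowerSeries.X ^ (i + 1))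

open Finset

noncomputable section

lemma isUnit_one_sub_X_pow (e : ℕ) (he : 1 ≤ e) : IsUnit (1 - X^e : PowerSeries ℤ) := by
  rw [PowerSeries.isUnit_iff_constantCoeff]
  have : constantCoeff ((1 : PowerSeries ℤ) - X^e) = 1 := by
    simp [map_sub, map_pow, constantCoeff_X, zero_pow (by omega : e ≠ 0)]
  rw [this]; exact isUnit_one

/-- Formal sums of power series families supported coefficientwise. -/
def psum (φ : ℕ → PowerSeries ℤ) : PowerSeries ℤ :=
  PowerSeries.mk fun N => ∑ A ∈ range (N+1), coeff N (φ A)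

lemma psum_coeff (φ : ℕ → PowerSeries ℤ) (N : ℕ) :
    coeff N (psum φ) = ∑ A ∈ range (N+1), coeff N (φ A) := coeff_mk _ _

lemma psum_congr {φ ψ : ℕ → PowerSeries ℤ} (h : ∀ A, φ A = ψ A) : psum φ = psum ψ := by
  unfold psum; congr 1; funext N; exact Finset.sum_congr rfl fun A _ => by rw [h A]

lemma psum_add (φ ψ : ℕ → PowerSeries ℤ) : psum (fun A => φ A + ψ A) = psum φ + psum ψ := by
  ext N; simp [psum_coeff, map_add, Finset.sum_add_distrib]

lemma psum_sub (φ ψ : ℕ → PowerSeries ℤ) : psum (fun A => φ A - ψ A) = psum φ - psum ψ := by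
  ext N; simp [psum_coeff, map_sub, Finset.sum_sub_distrib]

lemma coeff_X_pow_mul' (f : PowerSeries ℤ) (d N : ℕ) :
    coeff N (X^d * f) = if d ≤ N then coeff (N-d) f else 0 := by
  rw [mul_comm]; exact PowerSeries.coeff_mul_X_pow' f d N

lemma coeff_X_pow_mul_zero (f : PowerSeries ℤ) {d N : ℕ} (h : N < d) :
    coeff N (X^d * f) = 0 := by
  rw [coeff_X_pow_mul', if_neg (by omega)]

lemma psum_delta (a : ℕ) (V : PowerSeries ℤ) (hV : ∀ N < a, coeff N V = 0) :
    psum (fun A => if A = a then V else 0) = V := by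
  ext N
  rw [psum_coeff]
  have : ∀ A ∈ range (N+1), coeff N (if A = a then V else 0)
      = if A = a then coeff N V else 0 := by
    intro A _; split_ifs <;> simp
  rw [Finset.sum_congr rfl this, Finset.sum_ite_eq' (range (N+1)) a fun _ => coeff N V]
  split_ifs with h
  · rfl
  · simp only [mem_range] at h
    exact (hV N (by omega)).symm

/-- Tail geometric series: `∑_{A ≥ a} X^(c A + s) C = X^(c a + s) (1 - X^c)⁻¹ C`. -/
lemma psum_geom (c s a : ℕ) (hc : 1 ≤ c) (C : PowerSeries ℤ) :
    psum (fun A => if a ≤ A then X^(c*A+s) * C else 0)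
      = X^(c*a+s) * Ring.inverse (1 - X^c) * C := by
  have hu := isUnit_one_sub_X_pow c hc
  induction a with
  | zero =>
    have key : (1 - X^c) * psum (fun A => if 0 ≤ A then X^(c*A+s) * C else 0)
        = X^(c*0+s) * C := by
      ext N
      rw [sub_mul, one_mul, map_sub]
      have h1 : coeff N (psum fun A => if 0 ≤ A then X^(c*A+s) * C else 0)
          = ∑ A ∈ range (N+1), coeff N (X^(c*A+s) * C) := by
        rw [psum_coeff]; exact Finset.sum_congr rfl fun A _ => by rw [if_pos (Nat.zero_le A)]
      have h2 : coeff N (X^c * psum fun A => if 0 ≤ A then X^(c*A+s) * C else 0)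
          = ∑ A ∈ range (N+1), coeff N (X^(c*(A+1)+s) * C) := by
        rw [coeff_X_pow_mul']
        split_ifs with hcN
        · rw [psum_coeff]
          have e1 : ∀ A : ℕ, coeff (N-c) (if 0 ≤ A then X^(c*A+s)*C else 0)
              = coeff N (X^(c*(A+1)+s) * C) := by
            intro A
            rw [if_pos (Nat.zero_le A), coeff_X_pow_mul', coeff_X_pow_mul']
            have hmul : c*(A+1)+s = c*A+s+c := by ring
            rw [hmul]
            split_ifs with h1 h2 h3
            · have hee : N - c - (c*A+s) = N - (c*A+s+c) := by omega
              rw [hee]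
            · omega
            · omega
            · rfl
          rw [Finset.sum_congr rfl fun A _ => e1 A]
          apply Finset.sum_subset
          · intro x hx; simp only [mem_range] at *; omega
          · intro A hA' hA
            simp only [mem_range] at hA hA'
            apply coeff_X_pow_mul_zero
            have h1 : A ≤ c*A := Nat.le_mul_of_pos_left A (by omega)
            have h2 : c*(A+1) = c*A + c := by ring
            omega
        · symm
          apply Finset.sum_eq_zero
          intro A _
          apply coeff_X_pow_mul_zero
          have h1 : c ≤ c*(A+1) := Nat.le_mul_of_pos_right c (by omega)
          omega
      rw [h1, h2, ← Finset.sum_sub_distrib]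
      have : ∀ A ∈ range (N+1), coeff N (X^(c*A+s)*C) - coeff N (X^(c*(A+1)+s)*C)
          = (fun A => coeff N (X^(c*A+s)*C)) A - (fun A => coeff N (X^(c*A+s)*C)) (A+1) := by
        intros; rfl
      rw [Finset.sum_congr rfl this, Finset.sum_range_sub']
      have hz : coeff N (X^(c*(N+1)+s) * C) = 0 := by
        apply coeff_X_pow_mul_zero
        have h1 : N+1 ≤ c*(N+1) := Nat.le_mul_of_pos_left (N+1) (by omega)
        omega
      rw [hz, sub_zero]
    calc psum (fun A => if 0 ≤ A then X^(c*A+s) * C else 0)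
        = (Ring.inverse (1-X^c) * (1-X^c)) * psum (fun A => if 0 ≤ A then X^(c*A+s) * C else 0) := by
          rw [Ring.inverse_mul_cancel _ hu, one_mul]
      _ = Ring.inverse (1-X^c) * ((1-X^c) * psum (fun A => if 0 ≤ A then X^(c*A+s) * C else 0)) := by
          ring
      _ = Ring.inverse (1-X^c) * (X^(c*0+s) * C) := by rw [key]
      _ = X^(c*0+s) * Ring.inverse (1-X^c) * C := by ring
  | succ a ih =>
    have hsplit : ∀ A : ℕ, (if a ≤ A then X^(c*A+s)*C else 0)
        = (if a+1 ≤ A then X^(c*A+s)*C else 0) + (if A = a then X^(c*a+s)*C else 0) := by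
      intro A
      by_cases h1 : A = a
      · subst h1
        rw [if_pos le_rfl, if_neg (by omega), if_pos rfl, zero_add]
      · by_cases h2 : a ≤ A
        · rw [if_pos h2, if_pos (by omega), if_neg h1, add_zero]
        · rw [if_neg h2, if_neg (by omega), if_neg h1, add_zero]
    have hδ : psum (fun A => if A = a then X^(c*a+s)*C else 0) = X^(c*a+s)*C := by
      apply psum_delta
      intro N hN
      apply coeff_X_pow_mul_zero
      have h1 : a ≤ c*a := Nat.le_mul_of_pos_left a (by omega)
      omega
    have := psum_congr hsplit
    rw [psum_add, hδ, ih] at this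
    have hinv : Ring.inverse ((1:PowerSeries ℤ)-X^c) - 1 = X^c * Ring.inverse (1-X^c) := by
      linear_combination (Ring.inverse_mul_cancel _ hu)
    have : psum (fun A => if a+1 ≤ A then X^(c*A+s)*C else 0)
        = X^(c*a+s) * (Ring.inverse (1-X^c) - 1) * C := by
      linear_combination -this
    rw [this, hinv, show c*(a+1)+s = c*a+s+c by ring, pow_add]
    ring

/-- Bounded geometric series over `[b, a]`. -/
lemma psum_Icc (c s b a : ℕ) (hc : 1 ≤ c) (hba : b ≤ a + 1) (C : PowerSeries ℤ) :
    psum (fun j => if b ≤ j ∧ j ≤ a then X^(c*j+s) * C else 0)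
      = (X^(c*b+s) - X^(c*(a+1)+s)) * Ring.inverse (1 - X^c) * C := by
  have hsplit : ∀ j : ℕ, (if b ≤ j ∧ j ≤ a then X^(c*j+s)*C else 0)
      = (if b ≤ j then X^(c*j+s)*C else 0) - (if a+1 ≤ j then X^(c*j+s)*C else 0) := by
    intro j
    by_cases h1 : b ≤ j
    · by_cases h2 : j ≤ a
      · rw [if_pos ⟨h1, h2⟩, if_pos h1, if_neg (by omega), sub_zero]
      · rw [if_neg (by tauto), if_pos h1, if_pos (by omega), sub_self]
    · rw [if_neg (by tauto), if_neg h1, if_neg (by omega), zero_sub, neg_zero]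
  rw [psum_congr hsplit, psum_sub, psum_geom c s b hc C, psum_geom c s (a+1) hc C]
  ring

noncomputable section

def gcnt {α : Type*} (P : α → Prop) (w : α → ℕ) : PowerSeries ℤ :=
  PowerSeries.mk fun N => (Nat.card {x : α // P x ∧ w x = N} : ℤ)

lemma gcnt_coeff {α : Type*} (P : α → Prop) (w : α → ℕ) (N : ℕ) :
    coeff N (gcnt P w) = (Nat.card {x : α // P x ∧ w x = N} : ℤ) := coeff_mk _ _

lemma gcnt_congr {α : Type*} {P P' : α → Prop} {w w' : α → ℕ}
    (hP : ∀ x, P x ↔ P' x) (hw : ∀ x, P x → w x = w' x) : gcnt P w = gcnt P' w' := by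
  ext N
  rw [gcnt_coeff, gcnt_coeff]
  congr 1
  apply Nat.card_congr
  exact Equiv.subtypeEquivRight fun x => by
    constructor
    · rintro ⟨h1, h2⟩; exact ⟨(hP x).1 h1, by rw [← hw x h1]; exact h2⟩
    · rintro ⟨h1, h2⟩; have := (hP x).2 h1; exact ⟨this, by rw [hw x this]; exact h2⟩

lemma gcnt_zero {α : Type*} {P : α → Prop} (w : α → ℕ) (h : ∀ x, ¬ P x) : gcnt P w = 0 := by
  ext N
  rw [gcnt_coeff]
  have : IsEmpty {x : α // P x ∧ w x = N} := ⟨fun y => h y.1 y.2.1⟩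
  simp [Nat.card_of_isEmpty]

lemma gcnt_good {α : Type*} {P : α → Prop} {w : α → ℕ} {a : ℕ}
    (h : ∀ x, P x → a ≤ w x) {N : ℕ} (hN : N < a) : coeff N (gcnt P w) = 0 := by
  rw [gcnt_coeff]
  have : IsEmpty {x : α // P x ∧ w x = N} :=
    ⟨fun y => by have h1 := h y.1 y.2.1; have h2 := y.2.2; omega⟩
  simp [Nat.card_of_isEmpty]

lemma gcnt_equiv {α β : Type*} (e : α ≃ β) (P : α → Prop) (P' : β → Prop) (w : α → ℕ) (w' : β → ℕ)
    (hP : ∀ x, P x ↔ P' (e x)) (hw : ∀ x, P x → w x = w' (e x)) :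
    gcnt P w = gcnt P' w' := by
  ext N
  rw [gcnt_coeff, gcnt_coeff]
  congr 1
  apply Nat.card_congr
  refine Equiv.subtypeEquiv e fun x => ?_
  constructor
  · rintro ⟨h1, h2⟩; exact ⟨(hP x).1 h1, by rw [← hw x h1]; exact h2⟩
  · rintro ⟨h1, h2⟩; have := (hP x).2 h1; exact ⟨this, by rw [hw x this]; exact h2⟩

lemma gcnt_shift {α : Type*} (P : α → Prop) (w : α → ℕ) (c : ℕ) :
    gcnt P (fun x => c + w x) = X^c * gcnt P w := by
  ext N
  rw [gcnt_coeff, mul_comm, PowerSeries.coeff_mul_X_pow']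
  split_ifs with h
  · rw [gcnt_coeff]
    congr 1
    apply Nat.card_congr
    exact Equiv.subtypeEquivRight fun x => by
      constructor
      · rintro ⟨h1, h2⟩; exact ⟨h1, by omega⟩
      · rintro ⟨h1, h2⟩; exact ⟨h1, by omega⟩
  · have : IsEmpty {x : α // P x ∧ c + w x = N} := ⟨fun y => by have := y.2.2; omega⟩
    simp [Nat.card_of_isEmpty]

lemma gcnt_fst_pinned {α₁ α₂ : Type*} (v : α₁) (Q : α₂ → Prop) (w : α₁ × α₂ → ℕ) :
    gcnt (fun x : α₁ × α₂ => x.1 = v ∧ Q x.2) w = gcnt Q (fun y => w (v, y)) := by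
  ext N
  rw [gcnt_coeff, gcnt_coeff]
  congr 1
  apply Nat.card_congr
  refine ⟨fun x => ⟨x.1.2, x.2.1.2, ?_⟩, fun y => ⟨(v, y.1), ⟨rfl, y.2.1⟩, y.2.2⟩,
    fun x => ?_, fun y => rfl⟩
  · obtain ⟨⟨x1, x2⟩, ⟨h1, h2⟩, h3⟩ := x
    cases h1
    exact h3
  · obtain ⟨⟨x1, x2⟩, ⟨h1, h2⟩, h3⟩ := x
    cases h1
    rfl

lemma nat_card_sigma {ι : Type*} [Fintype ι] (f : ι → Type*) [hf : ∀ i, Finite (f i)] :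
    Nat.card (Σ i, f i) = ∑ i, Nat.card (f i) := by
  letI : ∀ i, Fintype (f i) := fun i => Fintype.ofFinite _
  rw [Nat.card_eq_fintype_card, Fintype.card_sigma]
  exact Finset.sum_congr rfl fun i _ => (Nat.card_eq_fintype_card).symm

lemma gcnt_prod {α₁ α₂ : Type*} (P₁ : α₁ → Prop) (P₂ : α₂ → Prop) (w₁ : α₁ → ℕ) (w₂ : α₂ → ℕ)
    (hfin₁ : ∀ N, Finite {x : α₁ // P₁ x ∧ w₁ x = N})
    (hfin₂ : ∀ N, Finite {x : α₂ // P₂ x ∧ w₂ x = N}) :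
    gcnt (fun x : α₁ × α₂ => P₁ x.1 ∧ P₂ x.2) (fun x => w₁ x.1 + w₂ x.2)
      = gcnt P₁ w₁ * gcnt P₂ w₂ := by
  classical
  ext N
  rw [gcnt_coeff, PowerSeries.coeff_mul]
  have e : {x : α₁ × α₂ // (P₁ x.1 ∧ P₂ x.2) ∧ w₁ x.1 + w₂ x.2 = N}
      ≃ Σ p : {p : ℕ × ℕ // p ∈ antidiagonal N},
          ({x : α₁ // P₁ x ∧ w₁ x = p.1.1} × {x : α₂ // P₂ x ∧ w₂ x = p.1.2}) := by
    refine ⟨fun x => ⟨⟨(w₁ x.1.1, w₂ x.1.2), Finset.HasAntidiagonal.mem_antidiagonal.2 x.2.2⟩,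
      ⟨x.1.1, x.2.1.1, rfl⟩, ⟨x.1.2, x.2.1.2, rfl⟩⟩,
      fun y => ⟨(y.2.1.1, y.2.2.1), ⟨y.2.1.2.1, y.2.2.2.1⟩, ?_⟩, fun x => rfl, ?_⟩
    · have e1 := y.2.1.2.2
      have e2 := y.2.2.2.2
      have e3 := Finset.HasAntidiagonal.mem_antidiagonal.1 y.1.2
      simp only [e1, e2]
      exact e3
    · rintro ⟨⟨⟨K, L⟩, hKL⟩, ⟨x1, h1, hw1⟩, ⟨x2, h2, hw2⟩⟩
      dsimp only at hw1 hw2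
      subst hw1
      subst hw2
      rfl
  haveI : ∀ p : {p : ℕ × ℕ // p ∈ antidiagonal N},
      Finite ({x : α₁ // P₁ x ∧ w₁ x = p.1.1} × {x : α₂ // P₂ x ∧ w₂ x = p.1.2}) := fun p => by
    haveI := hfin₁ p.1.1
    haveI := hfin₂ p.1.2
    infer_instance
  rw [Nat.card_congr e, nat_card_sigma]
  push_cast [Nat.card_prod]
  rw [Finset.sum_coe_sort (antidiagonal N)
    (fun p => (Nat.card {x : α₁ // P₁ x ∧ w₁ x = p.1} * Nat.card {x : α₂ // P₂ x ∧ w₂ x = p.2} : ℤ))]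
  exact Finset.sum_congr rfl fun p _ => by rw [gcnt_coeff, gcnt_coeff]

lemma gcnt_split {α : Type*} (P Q : α → Prop) (w : α → ℕ)
    (hfin : ∀ N, Finite {x : α // P x ∧ w x = N}) :
    gcnt P w = gcnt (fun x => P x ∧ Q x) w + gcnt (fun x => P x ∧ ¬ Q x) w := by
  classical
  ext N
  rw [gcnt_coeff, map_add, gcnt_coeff, gcnt_coeff]
  haveI := hfin N
  have e : {x : α // P x ∧ w x = N}
      ≃ {x : α // (P x ∧ Q x) ∧ w x = N} ⊕ {x : α // (P x ∧ ¬ Q x) ∧ w x = N} := by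
    refine (Equiv.sumCompl (fun s : {x : α // P x ∧ w x = N} => Q s.1)).symm.trans
      (Equiv.sumCongr ?_ ?_)
    · exact ⟨fun s => ⟨s.1.1, ⟨s.1.2.1, s.2⟩, s.1.2.2⟩, fun s => ⟨⟨s.1, s.2.1.1, s.2.2⟩, s.2.1.2⟩,
        fun s => rfl, fun s => rfl⟩
    · exact ⟨fun s => ⟨s.1.1, ⟨s.1.2.1, s.2⟩, s.1.2.2⟩, fun s => ⟨⟨s.1, s.2.1.1, s.2.2⟩, s.2.1.2⟩,
        fun s => rfl, fun s => rfl⟩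
  haveI : Finite {x : α // (P x ∧ Q x) ∧ w x = N} := by
    have e2 : {x : α // (P x ∧ Q x) ∧ w x = N} ≃ {s : {x : α // P x ∧ w x = N} // Q s.1} :=
      ⟨fun s => ⟨⟨s.1, s.2.1.1, s.2.2⟩, s.2.1.2⟩, fun s => ⟨s.1.1, ⟨s.1.2.1, s.2⟩, s.1.2.2⟩,
        fun s => rfl, fun s => rfl⟩
    exact Finite.of_equiv _ e2.symm
  haveI : Finite {x : α // (P x ∧ ¬ Q x) ∧ w x = N} := by
    have e2 : {x : α // (P x ∧ ¬ Q x) ∧ w x = N} ≃ {s : {x : α // P x ∧ w x = N} // ¬ Q s.1} :=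
      ⟨fun s => ⟨⟨s.1, s.2.1.1, s.2.2⟩, s.2.1.2⟩, fun s => ⟨s.1.1, ⟨s.1.2.1, s.2⟩, s.1.2.2⟩,
        fun s => rfl, fun s => rfl⟩
    exact Finite.of_equiv _ e2.symm
  rw [Nat.card_congr e, Nat.card_sum]
  push_cast
  ring

/-- Fibering a count over a statistic bounded by the weight. -/
lemma gcnt_fiber {α : Type*} (P : α → Prop) (w g : α → ℕ)
    (hfin : ∀ N, Finite {x : α // P x ∧ w x = N})
    (hg : ∀ x, P x → g x ≤ w x) :
    gcnt P w = psum (fun A => gcnt (fun x => P x ∧ g x = A) w) := by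
  classical
  ext N
  rw [gcnt_coeff, psum_coeff]
  haveI := hfin N
  have key : ∀ A : ℕ, coeff N (gcnt (fun x => P x ∧ g x = A) w)
      = (Nat.card {s : {x : α // P x ∧ w x = N} // g s.1 = A} : ℤ) := by
    intro A
    rw [gcnt_coeff]
    congr 1
    apply Nat.card_congr
    refine ⟨fun x => ⟨⟨x.1, x.2.1.1, x.2.2⟩, x.2.1.2⟩, fun s => ⟨s.1.1, ⟨s.1.2.1, s.2⟩, s.1.2.2⟩,
      fun x => rfl, fun s => rfl⟩
  rw [Finset.sum_congr rfl fun A _ => key A]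
  have e := (Equiv.sigmaFiberEquiv (fun s : {x : α // P x ∧ w x = N} =>
    (⟨g s.1, by have h1 := hg s.1 s.2.1; have h2 := s.2.2; omega⟩ : Fin (N+1)))).symm
  rw [Nat.card_congr e, nat_card_sigma]
  rw [← Fin.sum_univ_eq_sum_range (fun A => (Nat.card {s : {x : α // P x ∧ w x = N} // g s.1 = A} : ℤ))]
  push_cast
  apply Finset.sum_congr rfl
  intro b _
  congr 1
  apply Nat.card_congr
  apply Equiv.subtypeEquivRight
  intro s
  constructor
  · intro h; exact congrArg Fin.val h
  · intro h; exact Fin.ext h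



lemma gcnt_point {α : Type*} (v : α) (w : α → ℕ) : gcnt (fun x => x = v) w = X^(w v) := by
  ext N
  rw [gcnt_coeff, PowerSeries.coeff_X_pow]
  split_ifs with h
  · haveI : Unique {x : α // x = v ∧ w x = N} :=
      ⟨⟨⟨v, rfl, h.symm⟩⟩, fun y => Subtype.ext y.2.1⟩
    simp [Nat.card_unique]
  · have : IsEmpty {x : α // x = v ∧ w x = N} :=
      ⟨fun y => h (by rw [← y.2.1]; exact y.2.2.symm)⟩
    simp [Nat.card_of_isEmpty]

/-! ### Strips -/

lemma monotone_iff_adj {k : ℕ} (f : Fin k → ℕ) :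
    Monotone f ↔ ∀ (i : ℕ) (hi : i + 1 < k), f ⟨i, by omega⟩ ≤ f ⟨i+1, hi⟩ := by
  constructor
  · intro hf i hi
    exact hf (Fin.mk_le_mk.mpr (by omega))
  · intro h x y hxy
    obtain ⟨x, hx⟩ := x
    obtain ⟨y, hy⟩ := y
    simp only [Fin.mk_le_mk] at hxy
    have key : ∀ d (yv : ℕ) (hyv : yv < k), yv = x + d → f ⟨x, hx⟩ ≤ f ⟨yv, hyv⟩ := by
      intro d
      induction d with
      | zero =>
        intro yv hyv hyx
        have : (⟨yv, hyv⟩ : Fin k) = ⟨x, hx⟩ := Fin.ext (by omega : yv = x)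
        rw [this]
      | succ d ih =>
        intro yv hyv hyx
        have h1 : f ⟨x, hx⟩ ≤ f ⟨x + d, by omega⟩ := ih (x+d) (by omega) rfl
        have h2 : f ⟨x + d, by omega⟩ ≤ f ⟨x + d + 1, by omega⟩ := h (x+d) (by omega)
        have : (⟨yv, hyv⟩ : Fin k) = ⟨x + d + 1, by omega⟩ := Fin.ext (by omega : yv = x + d + 1)
        rw [this]
        exact le_trans h1 h2
    exact key (y - x) y hy (by omega)

lemma mono_val {k : ℕ} {f : Fin k → ℕ} (hf : Monotone f) {i i' : ℕ} (hi : i < k) (hi' : i' < k)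
    (h : i ≤ i') : f ⟨i, hi⟩ ≤ f ⟨i', hi'⟩ := hf (Fin.mk_le_mk.mpr h)

def StripP (k a b : ℕ) (A : Fin (k-1) → ℕ) (E : Fin k → ℕ) : Prop :=
  Monotone A ∧ (∀ h : 0 < k - 1, a ≤ A ⟨0, h⟩) ∧
  Monotone E ∧ (∀ h : 0 < k, b ≤ E ⟨0, h⟩) ∧ (∀ h : 0 < k, E ⟨0, h⟩ ≤ a) ∧
  (∀ t : Fin (k - 1), E ⟨(t : ℕ) + 1, by have := t.isLt; omega⟩ ≤ A t)

def stripW (k : ℕ) (p : (Fin (k-1) → ℕ) × (Fin k → ℕ)) : ℕ := (∑ t, p.1 t) + (∑ t, p.2 t)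

def stripGF (k a b : ℕ) : PowerSeries ℤ :=
  gcnt (fun p => StripP k a b p.1 p.2) (stripW k)

lemma finite_pair_tuples {ι κ : Type*} [Fintype ι] [Fintype κ]
    (P : ((ι → ℕ) × (κ → ℕ)) → Prop) (N : ℕ) :
    Finite {p : (ι → ℕ) × (κ → ℕ) // P p ∧ (∑ i, p.1 i) + (∑ j, p.2 j) = N} := by
  apply Finite.of_injective (β := (ι → Fin (N+1)) × (κ → Fin (N+1))) (fun p =>
    (fun i => ⟨p.1.1 i, by
      have h1 : p.1.1 i ≤ ∑ i', p.1.1 i' :=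
        Finset.single_le_sum (fun _ _ => Nat.zero_le _) (Finset.mem_univ i)
      have h2 := p.2.2
      omega⟩,
     fun j => ⟨p.1.2 j, by
      have h1 : p.1.2 j ≤ ∑ j', p.1.2 j' :=
        Finset.single_le_sum (fun _ _ => Nat.zero_le _) (Finset.mem_univ j)
      have h2 := p.2.2
      omega⟩))
  intro p q hpq
  have h1 : ∀ i, p.1.1 i = q.1.1 i := fun i =>
    congrArg Fin.val (congrFun (congrArg Prod.fst hpq) i)
  have h2 : ∀ j, p.1.2 j = q.1.2 j := fun j =>
    congrArg Fin.val (congrFun (congrArg Prod.snd hpq) j)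
  apply Subtype.ext
  exact Prod.ext (funext h1) (funext h2)

lemma strip_fin (k a b : ℕ) (N : ℕ) :
    Finite {p : (Fin (k-1) → ℕ) × (Fin k → ℕ) // (StripP k a b p.1 p.2) ∧ stripW k p = N} :=
  finite_pair_tuples _ N

/-- The base case `n = 1`. -/
lemma stripGF_one (a b : ℕ) (hba : b ≤ a) :
    stripGF 1 a b = (X^b - X^(a+1)) * Ring.inverse (1 - X^(1:ℕ)) := by
  have hbound : ∀ p : (Fin (1-1) → ℕ) × (Fin 1 → ℕ), StripP 1 a b p.1 p.2 →
      p.2 ⟨0, by omega⟩ ≤ stripW 1 p := by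
    intro p hp
    have h1 : p.2 ⟨0, by omega⟩ ≤ ∑ t, p.2 t :=
      Finset.single_le_sum (fun _ _ => Nat.zero_le _) (Finset.mem_univ _)
    unfold stripW
    omega
  rw [stripGF, gcnt_fiber _ _ _ (strip_fin 1 a b) hbound]
  have key : ∀ j : ℕ, gcnt (fun p : (Fin 0 → ℕ) × (Fin 1 → ℕ) =>
      StripP 1 a b p.1 p.2 ∧ p.2 ⟨0, by omega⟩ = j) (stripW 1)
      = if b ≤ j ∧ j ≤ a then X^(1*j+0) * 1 else 0 := by
    intro j
    split_ifs with hj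
    · have hpoint : ∀ p : (Fin 0 → ℕ) × (Fin 1 → ℕ),
          (StripP 1 a b p.1 p.2 ∧ p.2 ⟨0, by omega⟩ = j)
          ↔ p = ((fun t => t.elim0), fun _ => j) := by
        intro p
        constructor
        · rintro ⟨hP, hpin⟩
          apply Prod.ext
          · funext t; exact t.elim0
          · funext t
            have : t = ⟨0, by omega⟩ := by
              apply Fin.ext
              have := t.isLt
              omega
            rw [this]
            exact hpin
        · rintro rfl
          refine ⟨⟨?_, ?_, ?_, ?_, ?_, ?_⟩, rfl⟩
          · intro x y _; exact x.elim0
          · intro h; omega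
          · intro x y _; exact le_rfl
          · intro h; exact hj.1
          · intro h; exact hj.2
          · intro t; exact t.elim0
      rw [gcnt_congr hpoint (fun _ _ => rfl), gcnt_point]
      have : stripW 1 ((fun t => t.elim0), fun _ => j) = 1*j+0 := by
        unfold stripW
        simp
      rw [this, mul_one]
    · apply gcnt_zero
      rintro p ⟨hP, hpin⟩
      have h1 := hP.2.2.2.1 (by omega)
      have h2 := hP.2.2.2.2.1 (by omega)
      rw [hpin] at h1 h2
      omega
  rw [psum_congr key, psum_Icc 1 0 b a (by omega) (by omega) 1]
  simp [one_mul, mul_one]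




lemma strip_fin' (k : ℕ) (P : ((Fin (k-1) → ℕ) × (Fin k → ℕ)) → Prop) (N : ℕ) :
    Finite {p : (Fin (k-1) → ℕ) × (Fin k → ℕ) // P p ∧ stripW k p = N} := by
  unfold stripW
  exact finite_pair_tuples P N

/-- Splitting off the heads of the two rows of a strip. -/
def headSplit (l : ℕ) : ((Fin (l+1) → ℕ) × (Fin (l+2) → ℕ))
    ≃ ((ℕ × ℕ) × ((Fin l → ℕ) × (Fin (l+1) → ℕ))) where
  toFun p := ((p.1 ⟨0, by omega⟩, p.2 ⟨0, by omega⟩), (fun i => p.1 i.succ, fun i => p.2 i.succ))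
  invFun q := (Fin.cons q.1.1 q.2.1, Fin.cons q.1.2 q.2.2)
  left_inv p := by
    refine Prod.ext ?_ ?_ <;> funext i <;> induction i using Fin.cases <;> simp
  right_inv q := by
    refine Prod.ext (Prod.ext rfl rfl) (Prod.ext ?_ ?_) <;> funext i <;> simp

lemma stripGF_rec (l a b : ℕ) :
    stripGF (l+2) a b = psum (fun A1 => psum (fun j =>
      if a ≤ A1 ∧ b ≤ j ∧ j ≤ a then X^(A1+j) * stripGF (l+1) A1 j else 0)) := by
  have hbA : ∀ p : (Fin (l+2-1) → ℕ) × (Fin (l+2) → ℕ), StripP (l+2) a b p.1 p.2 →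
      p.1 ⟨0, by omega⟩ ≤ stripW (l+2) p := by
    intro p _
    have h1 : p.1 ⟨0, by omega⟩ ≤ ∑ t, p.1 t :=
      Finset.single_le_sum (fun _ _ => Nat.zero_le _) (Finset.mem_univ _)
    unfold stripW
    omega
  rw [stripGF, gcnt_fiber _ _ _ (strip_fin' _ _) hbA]
  apply psum_congr
  intro A1
  have hbE : ∀ p : (Fin (l+2-1) → ℕ) × (Fin (l+2) → ℕ),
      (StripP (l+2) a b p.1 p.2 ∧ p.1 ⟨0, by omega⟩ = A1) →
      p.2 ⟨0, by omega⟩ ≤ stripW (l+2) p := by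
    intro p _
    have h1 : p.2 ⟨0, by omega⟩ ≤ ∑ t, p.2 t :=
      Finset.single_le_sum (fun _ _ => Nat.zero_le _) (Finset.mem_univ _)
    unfold stripW
    omega
  rw [gcnt_fiber _ _ _ (strip_fin' _ _) hbE]
  apply psum_congr
  intro j
  by_cases hc : a ≤ A1 ∧ b ≤ j ∧ j ≤ a
  · rw [if_pos hc]
    have hPiff : ∀ p : (Fin (l+1) → ℕ) × (Fin (l+2) → ℕ),
        ((StripP (l+2) a b p.1 p.2 ∧ p.1 ⟨0, by omega⟩ = A1) ∧ p.2 ⟨0, by omega⟩ = j)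
        ↔ ((headSplit l p).1 = (A1, j) ∧
            StripP (l+1) A1 j (headSplit l p).2.1 (headSplit l p).2.2) := by
      intro p
      obtain ⟨A, E⟩ := p
      simp only [headSplit, Equiv.coe_fn_mk]
      constructor
      · rintro ⟨⟨⟨m1, m2, m3, m4, m5, m6⟩, hA⟩, hE⟩
        refine ⟨by rw [Prod.mk.injEq]; exact ⟨hA, hE⟩, ?_, ?_, ?_, ?_, ?_, ?_⟩
        · intro x y hxy
          exact m1 (by simp only [Fin.le_def, Fin.val_succ] at hxy ⊢; omega)
        · intro h
          rw [← hA]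
          exact mono_val m1 (by omega) (by omega) (by omega)
        · intro x y hxy
          exact m3 (by simp only [Fin.le_def, Fin.val_succ] at hxy ⊢; omega)
        · intro h
          rw [← hE]
          exact mono_val m3 (by omega) (by omega) (by omega)
        · intro h
          rw [← hA]
          have := m6 ⟨0, by omega⟩
          exact this
        · intro t
          have := m6 ⟨(t : ℕ) + 1, by have := t.isLt; omega⟩
          exact this
      · rintro ⟨hpin, m1, m2, m3, m4, m5, m6⟩
        rw [Prod.mk.injEq] at hpin
        obtain ⟨hA, hE⟩ := hpin
        refine ⟨⟨⟨?_, ?_, ?_, ?_, ?_, ?_⟩, hA⟩, hE⟩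
        · rw [monotone_iff_adj]
          intro i hi
          rcases Nat.eq_zero_or_pos i with h0 | hpos
          · subst h0
            have h2 := m2 (by omega)
            calc A ⟨0, by omega⟩ = A1 := hA
            _ ≤ A (Fin.succ ⟨0, by omega⟩) := h2
            _ = A ⟨1, hi⟩ := rfl
          · obtain ⟨i', rfl⟩ : ∃ i', i = i' + 1 := ⟨i - 1, by omega⟩
            have := mono_val (f := fun i : Fin l => A i.succ) m1
              (i := i') (i' := i'+1) (by omega) (by omega) (by omega)
            exact this
        · intro h
          rw [hA]
          exact hc.1
        · rw [monotone_iff_adj]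
          intro i hi
          rcases Nat.eq_zero_or_pos i with h0 | hpos
          · subst h0
            have h2 := m4 (by omega)
            calc E ⟨0, by omega⟩ = j := hE
            _ ≤ E (Fin.succ ⟨0, by omega⟩) := h2
            _ = E ⟨1, hi⟩ := rfl
          · obtain ⟨i', rfl⟩ : ∃ i', i = i' + 1 := ⟨i - 1, by omega⟩
            have := mono_val (f := fun i : Fin (l+1) => E i.succ) m3
              (i := i') (i' := i'+1) (by omega) (by omega) (by omega)
            exact this
        · intro h
          rw [hE]
          exact hc.2.1
        · intro h
          rw [hE]
          exact hc.2.2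
        · intro t
          obtain ⟨tv, hlt⟩ := t
          rcases Nat.eq_zero_or_pos tv with h0 | hpos
          · subst h0
            have h5 := m5 (by omega)
            rw [← hA] at h5
            exact h5
          · obtain ⟨t', rfl⟩ : ∃ t', tv = t' + 1 := ⟨tv - 1, by omega⟩
            exact m6 ⟨t', by omega⟩
    have hWeq : ∀ p : (Fin (l+1) → ℕ) × (Fin (l+2) → ℕ),
        ((StripP (l+2) a b p.1 p.2 ∧ p.1 ⟨0, by omega⟩ = A1) ∧ p.2 ⟨0, by omega⟩ = j) →
        stripW (l+2) p = (fun q : (ℕ × ℕ) × ((Fin l → ℕ) × (Fin (l+1) → ℕ)) =>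
          (q.1.1 + q.1.2) + stripW (l+1) q.2) (headSplit l p) := by
      intro p _
      obtain ⟨A, E⟩ := p
      show (∑ x : Fin (l+1), A x) + (∑ x : Fin (l+2), E x)
        = A ⟨0, by omega⟩ + E ⟨0, by omega⟩
          + ((∑ x : Fin l, A x.succ) + (∑ x : Fin (l+1), E x.succ))
      rw [Fin.sum_univ_succ (f := A), Fin.sum_univ_succ (f := E)]
      have e1 : A (0 : Fin (l+1)) = A ⟨0, by omega⟩ := rfl
      have e2 : E (0 : Fin (l+2)) = E ⟨0, by omega⟩ := rfl
      rw [e1, e2]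
      omega
    have hgoal : gcnt (fun p : (Fin (l+2-1) → ℕ) × (Fin (l+2) → ℕ) =>
          (StripP (l+2) a b p.1 p.2 ∧ p.1 ⟨0, by omega⟩ = A1) ∧ p.2 ⟨0, by omega⟩ = j)
          (stripW (l+2))
        = gcnt (fun p : (Fin (l+1) → ℕ) × (Fin (l+2) → ℕ) =>
          (StripP (l+2) a b p.1 p.2 ∧ p.1 ⟨0, by omega⟩ = A1) ∧ p.2 ⟨0, by omega⟩ = j)
          (stripW (l+2)) := rfl
    rw [hgoal, gcnt_equiv (headSplit l) _
      (fun q : (ℕ × ℕ) × ((Fin l → ℕ) × (Fin (l+1) → ℕ)) =>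
        q.1 = (A1, j) ∧ StripP (l+1) A1 j q.2.1 q.2.2) _
      (fun q : (ℕ × ℕ) × ((Fin l → ℕ) × (Fin (l+1) → ℕ)) =>
        (q.1.1 + q.1.2) + stripW (l+1) q.2) hPiff hWeq,
      gcnt_fst_pinned (A1, j)
        (fun y : (Fin l → ℕ) × (Fin (l+1) → ℕ) => StripP (l+1) A1 j y.1 y.2)]
    have heq2 : (fun y : (Fin l → ℕ) × (Fin (l+1) → ℕ) =>
        (fun q : (ℕ × ℕ) × ((Fin l → ℕ) × (Fin (l+1) → ℕ)) =>
          (q.1.1 + q.1.2) + stripW (l+1) q.2) ((A1, j), y))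
        = (fun y : (Fin l → ℕ) × (Fin (l+1) → ℕ) => (A1 + j) + stripW (l+1) y) := rfl
    rw [heq2, gcnt_shift]
    rfl
  · rw [if_neg hc]
    apply gcnt_zero
    rintro p ⟨⟨hP, hpinA⟩, hpinE⟩
    apply hc
    refine ⟨?_, ?_, ?_⟩
    · rw [← hpinA]; exact hP.2.1 (by omega)
    · rw [← hpinE]; exact hP.2.2.2.1 (by omega)
    · rw [← hpinE]; exact hP.2.2.2.2.1 (by omega)



lemma qqPoch_succ (k : ℕ) : qqPoch (k+1) = qqPoch k * (1 - X^(k+1)) := by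
  rw [qqPoch, Finset.prod_range_succ]
  rfl

lemma psum_zero : psum (fun _ => (0 : PowerSeries ℤ)) = 0 := by
  ext N
  simp [psum_coeff]

theorem strip_closed : ∀ n, 1 ≤ n → ∀ a b : ℕ, b ≤ a →
    stripGF n a b = X^((n-1)*a + n*b) * (1 - X^(a-b+1))
      * Ring.inverse (qqPoch (n-1) * qqPoch n) := by
  intro n
  induction n with
  | zero => omega
  | succ k ih =>
    intro _ a b hba
    rcases Nat.eq_zero_or_pos k with rfl | hk
    · -- base case n = 1
      rw [stripGF_one a b hba]
      have h1 : qqPoch (1-1) * qqPoch 1 = 1 - X^(1:ℕ) := by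
        rw [show (1:ℕ)-1 = 0 from rfl, qqPoch, qqPoch]
        simp
      rw [h1]
      have h2 : (X:PowerSeries ℤ)^((1-1)*a + 1*b) * (1 - X^(a-b+1)) = X^b - X^(a+1) := by
        rw [show (1-1)*a + 1*b = b by omega, mul_sub, mul_one, ← pow_add]
        congr 2
        omega
      rw [h2]
    · obtain ⟨l, rfl⟩ : ∃ l, k = l + 1 := ⟨k-1, by omega⟩
      have ihl := ih (by omega)
      rw [stripGF_rec l a b]
      have hCl : qqPoch (l+1-1) * qqPoch (l+1) = qqPoch l * qqPoch (l+1) := by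
        rw [show l+1-1 = l from rfl]
      -- inner evaluation
      have inner : ∀ A1 : ℕ, psum (fun j =>
          if a ≤ A1 ∧ b ≤ j ∧ j ≤ a then X^(A1+j) * stripGF (l+1) A1 j else 0)
          = (if a ≤ A1 then X^((l+1)*A1 + (l+2)*b)
                * (Ring.inverse (1-X^(l+2)) * Ring.inverse (qqPoch l * qqPoch (l+1))) else 0)
            - (if a ≤ A1 then X^((l+1)*A1 + (l+2)*(a+1))
                * (Ring.inverse (1-X^(l+2)) * Ring.inverse (qqPoch l * qqPoch (l+1))) else 0)
            - ((if a ≤ A1 then X^((l+2)*A1 + ((l+1)*b+1))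
                * (Ring.inverse (1-X^(l+1)) * Ring.inverse (qqPoch l * qqPoch (l+1))) else 0)
              - (if a ≤ A1 then X^((l+2)*A1 + ((l+1)*(a+1)+1))
                * (Ring.inverse (1-X^(l+1)) * Ring.inverse (qqPoch l * qqPoch (l+1))) else 0)) := by
        intro A1
        by_cases hA : a ≤ A1
        · have hstep : ∀ j : ℕ, (if a ≤ A1 ∧ b ≤ j ∧ j ≤ a then X^(A1+j) * stripGF (l+1) A1 j else 0)
              = (if b ≤ j ∧ j ≤ a then X^((l+2)*j + (l+1)*A1)
                  * Ring.inverse (qqPoch l * qqPoch (l+1)) else 0)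
                - (if b ≤ j ∧ j ≤ a then X^((l+1)*j + ((l+2)*A1+1))
                  * Ring.inverse (qqPoch l * qqPoch (l+1)) else 0) := by
            intro j
            by_cases hj : b ≤ j ∧ j ≤ a
            · rw [if_pos ⟨hA, hj⟩, if_pos hj, if_pos hj]
              have hjA : j ≤ A1 := le_trans hj.2 hA
              rw [ihl A1 j hjA]
              rw [show l+1-1 = l from rfl]
              obtain ⟨d, rfl⟩ : ∃ d, A1 = j + d := ⟨A1 - j, by omega⟩
              rw [show j + d - j + 1 = d + 1 from by omega]
              ring
            · rw [if_neg (by tauto), if_neg hj, if_neg hj, sub_zero]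
          rw [psum_congr hstep, psum_sub,
            psum_Icc (l+2) ((l+1)*A1) b a (by omega) (by omega) _,
            psum_Icc (l+1) ((l+2)*A1+1) b a (by omega) (by omega) _]
          rw [if_pos hA, if_pos hA, if_pos hA, if_pos hA]
          ring
        · have hstep : ∀ j : ℕ, (if a ≤ A1 ∧ b ≤ j ∧ j ≤ a then X^(A1+j) * stripGF (l+1) A1 j else 0)
              = 0 := by
            intro j
            rw [if_neg (by tauto)]
          rw [psum_congr hstep, psum_zero]
          rw [if_neg hA, if_neg hA, if_neg hA, if_neg hA]
          ring
      rw [psum_congr inner]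
      rw [psum_sub, psum_sub, psum_sub]
      rw [psum_geom (l+1) ((l+2)*b) a (by omega) _,
        psum_geom (l+1) ((l+2)*(a+1)) a (by omega) _,
        psum_geom (l+2) ((l+1)*b+1) a (by omega) _,
        psum_geom (l+2) ((l+1)*(a+1)+1) a (by omega) _]
      -- final algebra
      have hpo : Ring.inverse (qqPoch (l+1+1-1) * qqPoch (l+1+1))
          = Ring.inverse (1-X^(l+1)) * Ring.inverse (1-X^(l+2))
            * Ring.inverse (qqPoch l * qqPoch (l+1)) := by
        rw [show l+1+1-1 = l+1 from rfl]
        rw [qqPoch_succ (l+1), show qqPoch (l+1) * (qqPoch (l+1) * (1 - X^(l+1+1)))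
            = (qqPoch l * qqPoch (l+1)) * ((1-X^(l+1)) * (1-X^(l+2))) from by
          rw [qqPoch_succ l]; ring]
        rw [Ring.mul_inverse_rev, Ring.mul_inverse_rev]
        ring
      rw [hpo]
      have hcancel : (l+1)*a + (l+2)*(a+1) = (l+2)*a + ((l+1)*(a+1)+1) := by ring
      rw [hcancel]
      rw [show (l+1+1-1)*a + (l+1+1)*b = (l+1)*a + (l+2)*b from by
        rw [show l+1+1-1 = l+1 from rfl]]
      have hmain' : (X:PowerSeries ℤ)^((l+1)*a + (l+2)*b) * (1 - X^(a-b+1))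
          = X^((l+1)*a + (l+2)*b) - X^((l+2)*a + ((l+1)*b+1)) := by
        obtain ⟨e, rfl⟩ : ∃ e, a = b + e := ⟨a - b, by omega⟩
        rw [show b + e - b + 1 = e + 1 from by omega]
        ring
      rw [hmain']
      ring


lemma psum_geom0 (c s : ℕ) (hc : 1 ≤ c) (C : PowerSeries ℤ) :
    psum (fun A => X^(c*A+s) * C) = X^s * Ring.inverse (1 - X^c) * C := by
  have h := psum_geom c s 0 hc C
  rw [show c*0+s = s by ring] at h
  rw [← h]
  apply psum_congr
  intro A
  rw [if_pos (Nat.zero_le A)]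

lemma psum_sub4 (F1 F2 F3 F4 : ℕ → PowerSeries ℤ) :
    psum (fun x => (F1 x - F2 x) - (F3 x - F4 x))
      = (psum F1 - psum F2) - (psum F3 - psum F4) := by
  rw [← psum_sub F1 F2, ← psum_sub F3 F4, ← psum_sub]

lemma psum4_comb (F1 F2 F3 F4 : ℕ → ℕ → ℕ → ℕ → PowerSeries ℤ) :
    psum (fun d => psum (fun c => psum (fun b => psum (fun a =>
        (F1 a b c d - F2 a b c d) - (F3 a b c d - F4 a b c d)))))
      = (psum (fun d => psum (fun c => psum (fun b => psum (fun a => F1 a b c d))))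
          - psum (fun d => psum (fun c => psum (fun b => psum (fun a => F2 a b c d)))))
        - (psum (fun d => psum (fun c => psum (fun b => psum (fun a => F3 a b c d))))
          - psum (fun d => psum (fun c => psum (fun b => psum (fun a => F4 a b c d))))) := by
  have h1 : ∀ d c b, psum (fun a => (F1 a b c d - F2 a b c d) - (F3 a b c d - F4 a b c d))
      = (psum (fun a => F1 a b c d) - psum (fun a => F2 a b c d))
        - (psum (fun a => F3 a b c d) - psum (fun a => F4 a b c d)) := fun d c b =>
    psum_sub4 _ _ _ _
  have h2 : ∀ d c, psum (fun b => psum (fun a =>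
      (F1 a b c d - F2 a b c d) - (F3 a b c d - F4 a b c d)))
      = (psum (fun b => psum (fun a => F1 a b c d)) - psum (fun b => psum (fun a => F2 a b c d)))
        - (psum (fun b => psum (fun a => F3 a b c d))
            - psum (fun b => psum (fun a => F4 a b c d))) := fun d c => by
    rw [psum_congr (h1 d c)]
    exact psum_sub4 _ _ _ _
  have h3 : ∀ d, psum (fun c => psum (fun b => psum (fun a =>
      (F1 a b c d - F2 a b c d) - (F3 a b c d - F4 a b c d))))
      = (psum (fun c => psum (fun b => psum (fun a => F1 a b c d)))
          - psum (fun c => psum (fun b => psum (fun a => F2 a b c d))))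
        - (psum (fun c => psum (fun b => psum (fun a => F3 a b c d)))
          - psum (fun c => psum (fun b => psum (fun a => F4 a b c d)))) := fun d => by
    rw [psum_congr (h2 d)]
    exact psum_sub4 _ _ _ _
  rw [psum_congr h3]
  exact psum_sub4 _ _ _ _

lemma quad (α β γ δ s : ℕ) (hα : 1 ≤ α) (hβ : 1 ≤ β) (hγ : 1 ≤ γ) (hδ : 1 ≤ δ)
    (K : PowerSeries ℤ) :
    psum (fun d => psum (fun c => psum (fun b => psum (fun a =>
        X^(α*a+β*b+γ*c+δ*d+s) * K))))
      = X^s * (Ring.inverse (1-X^δ) * (Ring.inverse (1-X^γ) * (Ring.inverse (1-X^β)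
          * (Ring.inverse (1-X^α) * K)))) := by
  have ha : ∀ d c b, psum (fun a => X^(α*a+β*b+γ*c+δ*d+s) * K)
      = X^(β*b+(γ*c+(δ*d+s))) * (Ring.inverse (1-X^α) * K) := by
    intro d c b
    rw [psum_congr (fun a => by
      rw [show α*a+β*b+γ*c+δ*d+s = α*a + (β*b+(γ*c+(δ*d+s))) by ring])]
    rw [psum_geom0 α _ hα K, mul_assoc]
  have hb : ∀ d c, psum (fun b => psum (fun a => X^(α*a+β*b+γ*c+δ*d+s) * K))
      = X^(γ*c+(δ*d+s)) * (Ring.inverse (1-X^β) * (Ring.inverse (1-X^α) * K)) := by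
    intro d c
    rw [psum_congr (ha d c), psum_geom0 β _ hβ _, mul_assoc]
  have hc' : ∀ d, psum (fun c => psum (fun b => psum (fun a => X^(α*a+β*b+γ*c+δ*d+s) * K)))
      = X^(δ*d+s) * (Ring.inverse (1-X^γ) * (Ring.inverse (1-X^β)
          * (Ring.inverse (1-X^α) * K))) := by
    intro d
    rw [psum_congr (hb d), psum_geom0 γ _ hγ _, mul_assoc]
  rw [psum_congr hc', psum_geom0 δ _ hδ _, mul_assoc]


/-! ### The big counting problem -/

abbrev TT (m n : ℕ) := (Fin 4 → ℕ) × (Fin (n - 1) → ℕ) × (Fin n → ℕ)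
  × (Fin (m - 1) → ℕ) × (Fin m → ℕ)

def BigP (m n : ℕ) (τ : TT m n) : Prop :=
  (τ.1 1 ≤ τ.1 0 ∧ τ.1 2 ≤ τ.1 0 ∧ τ.1 3 ≤ τ.1 1 ∧ τ.1 3 ≤ τ.1 2)
  ∧ StripP n (τ.1 1) (τ.1 3) τ.2.1 τ.2.2.1
  ∧ StripP m (τ.1 0) (τ.1 2) τ.2.2.2.1 τ.2.2.2.2

def bigW (m n : ℕ) (τ : TT m n) : ℕ :=
  (∑ i, τ.1 i) + (stripW n (τ.2.1, τ.2.2.1) + stripW m (τ.2.2.2.1, τ.2.2.2.2))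

lemma big_fin (m n : ℕ) (P : TT m n → Prop) (N : ℕ) :
    Finite {τ : TT m n // P τ ∧ bigW m n τ = N} := by
  apply Finite.of_injective (β := (Fin 4 → Fin (N+1)) × (Fin (n-1) → Fin (N+1))
    × (Fin n → Fin (N+1)) × (Fin (m-1) → Fin (N+1)) × (Fin m → Fin (N+1))) (fun τ =>
    (fun i => ⟨τ.1.1 i, by
      have h1 : τ.1.1 i ≤ ∑ i', τ.1.1 i' :=
        Finset.single_le_sum (fun _ _ => Nat.zero_le _) (Finset.mem_univ i)
      have h2 := τ.2.2
      unfold bigW at h2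
      omega⟩,
     fun i => ⟨τ.1.2.1 i, by
      have h1 : τ.1.2.1 i ≤ ∑ i', τ.1.2.1 i' :=
        Finset.single_le_sum (fun _ _ => Nat.zero_le _) (Finset.mem_univ i)
      have h2 := τ.2.2
      unfold bigW stripW at h2
      dsimp only at h2
      omega⟩,
     fun i => ⟨τ.1.2.2.1 i, by
      have h1 : τ.1.2.2.1 i ≤ ∑ i', τ.1.2.2.1 i' :=
        Finset.single_le_sum (fun _ _ => Nat.zero_le _) (Finset.mem_univ i)
      have h2 := τ.2.2
      unfold bigW stripW at h2
      dsimp only at h2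
      omega⟩,
     fun i => ⟨τ.1.2.2.2.1 i, by
      have h1 : τ.1.2.2.2.1 i ≤ ∑ i', τ.1.2.2.2.1 i' :=
        Finset.single_le_sum (fun _ _ => Nat.zero_le _) (Finset.mem_univ i)
      have h2 := τ.2.2
      unfold bigW stripW at h2
      dsimp only at h2
      omega⟩,
     fun i => ⟨τ.1.2.2.2.2 i, by
      have h1 : τ.1.2.2.2.2 i ≤ ∑ i', τ.1.2.2.2.2 i' :=
        Finset.single_le_sum (fun _ _ => Nat.zero_le _) (Finset.mem_univ i)
      have h2 := τ.2.2
      unfold bigW stripW at h2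
      dsimp only at h2
      omega⟩))
  intro p q hpq
  have e1 := congrArg Prod.fst hpq
  have e2 := congrArg (fun z => z.2.1) hpq
  have e3 := congrArg (fun z => z.2.2.1) hpq
  have e4 := congrArg (fun z => z.2.2.2.1) hpq
  have e5 := congrArg (fun z => z.2.2.2.2) hpq
  simp only at e1 e2 e3 e4 e5
  apply Subtype.ext
  refine Prod.ext (funext fun i => congrArg Fin.val (congrFun e1 i)) (Prod.ext
    (funext fun i => congrArg Fin.val (congrFun e2 i)) (Prod.ext
    (funext fun i => congrArg Fin.val (congrFun e3 i)) (Prod.ext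
    (funext fun i => congrArg Fin.val (congrFun e4 i))
    (funext fun i => congrArg Fin.val (congrFun e5 i)))))

def reassoc (m n : ℕ) : ((Fin (n-1) → ℕ) × (Fin n → ℕ) × (Fin (m-1) → ℕ) × (Fin m → ℕ))
    ≃ (((Fin (n-1) → ℕ) × (Fin n → ℕ)) × ((Fin (m-1) → ℕ) × (Fin m → ℕ))) :=
  ⟨fun y => ((y.1, y.2.1), (y.2.2.1, y.2.2.2)), fun q => (q.1.1, q.1.2, q.2.1, q.2.2),
    fun y => rfl, fun q => rfl⟩

/-- Evaluation of the fully pinned inner count. -/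
lemma pinned_eval (m n : ℕ) (hm : 1 ≤ m) (hn : 1 ≤ n) (v : Fin 4 → ℕ)
    (P : TT m n → Prop)
    (hiff : ∀ τ : TT m n, P τ ↔ (τ.1 = v ∧ (StripP n (v 1) (v 3) τ.2.1 τ.2.2.1
      ∧ StripP m (v 0) (v 2) τ.2.2.2.1 τ.2.2.2.2))) :
    gcnt P (bigW m n) = X^(v 0 + (v 1 + (v 2 + v 3)))
      * (stripGF n (v 1) (v 3) * stripGF m (v 0) (v 2)) := by
  rw [gcnt_congr hiff (fun _ _ => rfl)]
  rw [gcnt_fst_pinned v (fun y : (Fin (n-1) → ℕ) × (Fin n → ℕ) × (Fin (m-1) → ℕ) × (Fin m → ℕ)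
    => StripP n (v 1) (v 3) y.1 y.2.1 ∧ StripP m (v 0) (v 2) y.2.2.1 y.2.2.2)]
  have hw : (fun y : (Fin (n-1) → ℕ) × (Fin n → ℕ) × (Fin (m-1) → ℕ) × (Fin m → ℕ) =>
      bigW m n (v, y))
      = fun y => (v 0 + (v 1 + (v 2 + v 3)))
        + (stripW n (y.1, y.2.1) + stripW m (y.2.2.1, y.2.2.2)) := by
    funext y
    unfold bigW
    rw [Fin.sum_univ_four, (show v 0 + v 1 + v 2 + v 3 = v 0 + (v 1 + (v 2 + v 3)) by omega)]
  rw [hw, gcnt_shift]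
  congr 1
  rw [gcnt_equiv (reassoc m n)
    (fun y : (Fin (n-1) → ℕ) × (Fin n → ℕ) × (Fin (m-1) → ℕ) × (Fin m → ℕ) =>
      StripP n (v 1) (v 3) y.1 y.2.1 ∧ StripP m (v 0) (v 2) y.2.2.1 y.2.2.2)
    (fun q : ((Fin (n-1) → ℕ) × (Fin n → ℕ)) × ((Fin (m-1) → ℕ) × (Fin m → ℕ)) =>
      StripP n (v 1) (v 3) q.1.1 q.1.2 ∧ StripP m (v 0) (v 2) q.2.1 q.2.2)
    (fun y => stripW n (y.1, y.2.1) + stripW m (y.2.2.1, y.2.2.2))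
    (fun q => stripW n q.1 + stripW m q.2)
    (fun y => Iff.rfl) (fun y _ => rfl)]
  rw [gcnt_prod (fun p => StripP n (v 1) (v 3) p.1 p.2) (fun p => StripP m (v 0) (v 2) p.1 p.2)
    (stripW n) (stripW m) (strip_fin' n _) (strip_fin' m _)]
  rfl

lemma case1 (m n : ℕ) (hm : 1 ≤ m) (hn : 1 ≤ n) :
    gcnt (fun τ : TT m n => BigP m n τ ∧ τ.1 2 ≤ τ.1 1) (bigW m n)
    = psum (fun d => psum (fun c => psum (fun b => psum (fun a =>
        X^((a+b+c+d) + ((b+c+d) + ((c+d) + d)))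
          * (stripGF n (b+c+d) d * stripGF m (a+b+c+d) (c+d)))))) := by
  have hb1 : ∀ i : Fin 4, ∀ τ : TT m n, ∀ _ : True, τ.1 i ≤ bigW m n τ := by
    intro i τ _
    have h1 : τ.1 i ≤ ∑ i', τ.1 i' :=
      Finset.single_le_sum (fun _ _ => Nat.zero_le _) (Finset.mem_univ i)
    unfold bigW
    omega
  rw [gcnt_fiber _ _ (fun τ => τ.1 3) (big_fin m n _) (fun τ _ => hb1 3 τ trivial)]
  apply psum_congr
  intro d
  rw [gcnt_fiber _ _ (fun τ => τ.1 2 - τ.1 3) (big_fin m n _)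
    (fun τ _ => le_trans (Nat.sub_le _ _) (hb1 2 τ trivial))]
  apply psum_congr
  intro c
  rw [gcnt_fiber _ _ (fun τ => τ.1 1 - τ.1 2) (big_fin m n _)
    (fun τ _ => le_trans (Nat.sub_le _ _) (hb1 1 τ trivial))]
  apply psum_congr
  intro b
  rw [gcnt_fiber _ _ (fun τ => τ.1 0 - τ.1 1) (big_fin m n _)
    (fun τ _ => le_trans (Nat.sub_le _ _) (hb1 0 τ trivial))]
  apply psum_congr
  intro a
  have hiff : ∀ τ : TT m n,
      ((((BigP m n τ ∧ τ.1 2 ≤ τ.1 1) ∧ τ.1 3 = d) ∧ τ.1 2 - τ.1 3 = c)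
        ∧ τ.1 1 - τ.1 2 = b) ∧ τ.1 0 - τ.1 1 = a
      ↔ (τ.1 = ![a+b+c+d, b+c+d, c+d, d]
          ∧ (StripP n (![a+b+c+d, b+c+d, c+d, d] 1) (![a+b+c+d, b+c+d, c+d, d] 3) τ.2.1 τ.2.2.1
            ∧ StripP m (![a+b+c+d, b+c+d, c+d, d] 0) (![a+b+c+d, b+c+d, c+d, d] 2)
              τ.2.2.2.1 τ.2.2.2.2)) := by
    intro τ
    constructor
    · rintro ⟨⟨⟨⟨⟨⟨⟨hd1, hd2, hd3, hd4⟩, hs1, hs2⟩, hc32⟩, h4⟩, h3⟩, h2⟩, h1⟩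
      have hu3 : τ.1 3 = d := h4
      have hu2 : τ.1 2 = c + d := by omega
      have hu1 : τ.1 1 = b + c + d := by omega
      have hu0 : τ.1 0 = a + b + c + d := by omega
      have hfun : τ.1 = ![a+b+c+d, b+c+d, c+d, d] := by
        funext i
        fin_cases i <;> simp_all
      refine ⟨hfun, ?_, ?_⟩
      · rw [(show (![a+b+c+d, b+c+d, c+d, d] : Fin 4 → ℕ) 1 = b+c+d by simp),
          (show (![a+b+c+d, b+c+d, c+d, d] : Fin 4 → ℕ) 3 = d by simp), ← hu1, ← hu3]
        exact hs1
      · rw [(show (![a+b+c+d, b+c+d, c+d, d] : Fin 4 → ℕ) 0 = a+b+c+d by simp),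
          (show (![a+b+c+d, b+c+d, c+d, d] : Fin 4 → ℕ) 2 = c+d by simp), ← hu0, ← hu2]
        exact hs2
    · rintro ⟨hfun, hs1, hs2⟩
      have hu0 : τ.1 0 = a+b+c+d := by rw [hfun]; simp
      have hu1 : τ.1 1 = b+c+d := by rw [hfun]; simp
      have hu2 : τ.1 2 = c+d := by rw [hfun]; simp
      have hu3 : τ.1 3 = d := by rw [hfun]; simp
      refine ⟨⟨⟨⟨⟨⟨⟨?_, ?_, ?_, ?_⟩, ?_, ?_⟩, ?_⟩, ?_⟩, ?_⟩, ?_⟩, ?_⟩ <;>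
        first
        | omega
        | (rw [hu1, hu3]; rw [(show (![a+b+c+d, b+c+d, c+d, d] : Fin 4 → ℕ) 1 = b+c+d by simp),
            (show (![a+b+c+d, b+c+d, c+d, d] : Fin 4 → ℕ) 3 = d by simp)] at hs1; exact hs1)
        | (rw [hu0, hu2]; rw [(show (![a+b+c+d, b+c+d, c+d, d] : Fin 4 → ℕ) 0 = a+b+c+d by simp),
            (show (![a+b+c+d, b+c+d, c+d, d] : Fin 4 → ℕ) 2 = c+d by simp)] at hs2; exact hs2)
  rw [pinned_eval m n hm hn _ _ hiff]
  rw [(show (![a+b+c+d, b+c+d, c+d, d] : Fin 4 → ℕ) 0 = a+b+c+d by simp),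
    (show (![a+b+c+d, b+c+d, c+d, d] : Fin 4 → ℕ) 1 = b+c+d by simp),
    (show (![a+b+c+d, b+c+d, c+d, d] : Fin 4 → ℕ) 2 = c+d by simp),
    (show (![a+b+c+d, b+c+d, c+d, d] : Fin 4 → ℕ) 3 = d by simp)]


lemma case2 (m n : ℕ) (hm : 1 ≤ m) (hn : 1 ≤ n) :
    gcnt (fun τ : TT m n => BigP m n τ ∧ ¬ (τ.1 2 ≤ τ.1 1)) (bigW m n)
    = psum (fun d => psum (fun c => psum (fun b => psum (fun a =>
        X^((a+b+c+d+1) + ((c+d) + ((b+c+d+1) + d)))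
          * (stripGF n (c+d) d * stripGF m (a+b+c+d+1) (b+c+d+1)))))) := by
  have hb1 : ∀ i : Fin 4, ∀ τ : TT m n, ∀ _ : True, τ.1 i ≤ bigW m n τ := by
    intro i τ _
    have h1 : τ.1 i ≤ ∑ i', τ.1 i' :=
      Finset.single_le_sum (fun _ _ => Nat.zero_le _) (Finset.mem_univ i)
    unfold bigW
    omega
  rw [gcnt_fiber _ _ (fun τ => τ.1 3) (big_fin m n _) (fun τ _ => hb1 3 τ trivial)]
  apply psum_congr
  intro d
  rw [gcnt_fiber _ _ (fun τ => τ.1 1 - τ.1 3) (big_fin m n _)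
    (fun τ _ => le_trans (Nat.sub_le _ _) (hb1 1 τ trivial))]
  apply psum_congr
  intro c
  rw [gcnt_fiber _ _ (fun τ => τ.1 2 - τ.1 1 - 1) (big_fin m n _)
    (fun τ _ => le_trans (le_trans (Nat.sub_le _ _) (Nat.sub_le _ _)) (hb1 2 τ trivial))]
  apply psum_congr
  intro b
  rw [gcnt_fiber _ _ (fun τ => τ.1 0 - τ.1 2) (big_fin m n _)
    (fun τ _ => le_trans (Nat.sub_le _ _) (hb1 0 τ trivial))]
  apply psum_congr
  intro a
  have hiff : ∀ τ : TT m n,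
      ((((BigP m n τ ∧ ¬ (τ.1 2 ≤ τ.1 1)) ∧ τ.1 3 = d) ∧ τ.1 1 - τ.1 3 = c)
        ∧ τ.1 2 - τ.1 1 - 1 = b) ∧ τ.1 0 - τ.1 2 = a
      ↔ (τ.1 = ![a+b+c+d+1, c+d, b+c+d+1, d]
          ∧ (StripP n (![a+b+c+d+1, c+d, b+c+d+1, d] 1) (![a+b+c+d+1, c+d, b+c+d+1, d] 3)
              τ.2.1 τ.2.2.1
            ∧ StripP m (![a+b+c+d+1, c+d, b+c+d+1, d] 0) (![a+b+c+d+1, c+d, b+c+d+1, d] 2)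
              τ.2.2.2.1 τ.2.2.2.2)) := by
    intro τ
    constructor
    · rintro ⟨⟨⟨⟨⟨⟨⟨hd1, hd2, hd3, hd4⟩, hs1, hs2⟩, hc32⟩, h4⟩, h3⟩, h2⟩, h1⟩
      have hu3 : τ.1 3 = d := h4
      have hu1 : τ.1 1 = c + d := by omega
      have hu2 : τ.1 2 = b + c + d + 1 := by omega
      have hu0 : τ.1 0 = a + b + c + d + 1 := by omega
      have hfun : τ.1 = ![a+b+c+d+1, c+d, b+c+d+1, d] := by
        funext i
        fin_cases i <;> simp_all
      refine ⟨hfun, ?_, ?_⟩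
      · rw [(show (![a+b+c+d+1, c+d, b+c+d+1, d] : Fin 4 → ℕ) 1 = c+d by simp),
          (show (![a+b+c+d+1, c+d, b+c+d+1, d] : Fin 4 → ℕ) 3 = d by simp), ← hu1, ← hu3]
        exact hs1
      · rw [(show (![a+b+c+d+1, c+d, b+c+d+1, d] : Fin 4 → ℕ) 0 = a+b+c+d+1 by simp),
          (show (![a+b+c+d+1, c+d, b+c+d+1, d] : Fin 4 → ℕ) 2 = b+c+d+1 by simp), ← hu0, ← hu2]
        exact hs2
    · rintro ⟨hfun, hs1, hs2⟩
      have hu0 : τ.1 0 = a+b+c+d+1 := by rw [hfun]; simp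
      have hu1 : τ.1 1 = c+d := by rw [hfun]; simp
      have hu2 : τ.1 2 = b+c+d+1 := by rw [hfun]; simp
      have hu3 : τ.1 3 = d := by rw [hfun]; simp
      refine ⟨⟨⟨⟨⟨⟨⟨?_, ?_, ?_, ?_⟩, ?_, ?_⟩, ?_⟩, ?_⟩, ?_⟩, ?_⟩, ?_⟩ <;>
        first
        | omega
        | (rw [hu1, hu3]; rw [(show (![a+b+c+d+1, c+d, b+c+d+1, d] : Fin 4 → ℕ) 1 = c+d by simp),
            (show (![a+b+c+d+1, c+d, b+c+d+1, d] : Fin 4 → ℕ) 3 = d by simp)] at hs1; exact hs1)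
        | (rw [hu0, hu2];
            rw [(show (![a+b+c+d+1, c+d, b+c+d+1, d] : Fin 4 → ℕ) 0 = a+b+c+d+1 by simp),
            (show (![a+b+c+d+1, c+d, b+c+d+1, d] : Fin 4 → ℕ) 2 = b+c+d+1 by simp)] at hs2;
            exact hs2)
  rw [pinned_eval m n hm hn _ _ hiff]
  rw [(show (![a+b+c+d+1, c+d, b+c+d+1, d] : Fin 4 → ℕ) 0 = a+b+c+d+1 by simp),
    (show (![a+b+c+d+1, c+d, b+c+d+1, d] : Fin 4 → ℕ) 1 = c+d by simp),
    (show (![a+b+c+d+1, c+d, b+c+d+1, d] : Fin 4 → ℕ) 2 = b+c+d+1 by simp),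
    (show (![a+b+c+d+1, c+d, b+c+d+1, d] : Fin 4 → ℕ) 3 = d by simp)]

/-- Abbreviation for the inverse factors. -/
noncomputable def I1 (e : ℕ) : PowerSeries ℤ := Ring.inverse (1 - X^e)

lemma case1_closed (m' n' : ℕ) :
    psum (fun d => psum (fun c => psum (fun b => psum (fun a =>
        X^((a+b+c+d) + ((b+c+d) + ((c+d) + d)))
          * (stripGF (n'+1) (b+c+d) d * stripGF (m'+1) (a+b+c+d) (c+d))))))
    = (X^(0:ℕ) * (I1 (2*m'+2*n'+6) * (I1 (2*m'+n'+4) * (I1 (m'+n'+2) * (I1 (m'+1)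
          * (Ring.inverse (qqPoch n' * qqPoch (n'+1)) * Ring.inverse (qqPoch m' * qqPoch (m'+1)))))))
        - X^(1:ℕ) * (I1 (2*m'+2*n'+6) * (I1 (2*m'+n'+5) * (I1 (m'+n'+3) * (I1 (m'+1)
          * (Ring.inverse (qqPoch n' * qqPoch (n'+1)) * Ring.inverse (qqPoch m' * qqPoch (m'+1))))))))
      - (X^(1:ℕ) * (I1 (2*m'+2*n'+6) * (I1 (2*m'+n'+4) * (I1 (m'+n'+3) * (I1 (m'+2)
          * (Ring.inverse (qqPoch n' * qqPoch (n'+1)) * Ring.inverse (qqPoch m' * qqPoch (m'+1)))))))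
        - X^(2:ℕ) * (I1 (2*m'+2*n'+6) * (I1 (2*m'+n'+5) * (I1 (m'+n'+4) * (I1 (m'+2)
          * (Ring.inverse (qqPoch n' * qqPoch (n'+1)) * Ring.inverse (qqPoch m' * qqPoch (m'+1)))))))) := by
  have hpt : ∀ a b c d : ℕ,
      X^((a+b+c+d) + ((b+c+d) + ((c+d) + d)))
          * (stripGF (n'+1) (b+c+d) d * stripGF (m'+1) (a+b+c+d) (c+d))
      = (X^((m'+1)*a+(m'+n'+2)*b+(2*m'+n'+4)*c+(2*m'+2*n'+6)*d+0)
            * (Ring.inverse (qqPoch n' * qqPoch (n'+1)) * Ring.inverse (qqPoch m' * qqPoch (m'+1)))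
          - X^((m'+1)*a+(m'+n'+3)*b+(2*m'+n'+5)*c+(2*m'+2*n'+6)*d+1)
            * (Ring.inverse (qqPoch n' * qqPoch (n'+1)) * Ring.inverse (qqPoch m' * qqPoch (m'+1))))
        - (X^((m'+2)*a+(m'+n'+3)*b+(2*m'+n'+4)*c+(2*m'+2*n'+6)*d+1)
            * (Ring.inverse (qqPoch n' * qqPoch (n'+1)) * Ring.inverse (qqPoch m' * qqPoch (m'+1)))
          - X^((m'+2)*a+(m'+n'+4)*b+(2*m'+n'+5)*c+(2*m'+2*n'+6)*d+2)
            * (Ring.inverse (qqPoch n' * qqPoch (n'+1)) * Ring.inverse (qqPoch m' * qqPoch (m'+1)))) := by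
    intro a b c d
    rw [strip_closed (n'+1) (by omega) (b+c+d) d (by omega),
      strip_closed (m'+1) (by omega) (a+b+c+d) (c+d) (by omega)]
    rw [(show n'+1-1 = n' from rfl), (show m'+1-1 = m' from rfl)]
    rw [(show b+c+d-d+1 = b+c+1 from by omega), (show a+b+c+d-(c+d)+1 = a+b+1 from by omega)]
    ring
  rw [psum_congr (fun d => psum_congr (fun c => psum_congr (fun b =>
    psum_congr (fun a => hpt a b c d))))]
  rw [psum4_comb,
    quad (m'+1) (m'+n'+2) (2*m'+n'+4) (2*m'+2*n'+6) 0 (by omega) (by omega) (by omega) (by omega) _,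
    quad (m'+1) (m'+n'+3) (2*m'+n'+5) (2*m'+2*n'+6) 1 (by omega) (by omega) (by omega) (by omega) _,
    quad (m'+2) (m'+n'+3) (2*m'+n'+4) (2*m'+2*n'+6) 1 (by omega) (by omega) (by omega) (by omega) _,
    quad (m'+2) (m'+n'+4) (2*m'+n'+5) (2*m'+2*n'+6) 2 (by omega) (by omega) (by omega) (by omega) _]
  rfl

lemma case2_closed (m' n' : ℕ) :
    psum (fun d => psum (fun c => psum (fun b => psum (fun a =>
        X^((a+b+c+d+1) + ((c+d) + ((b+c+d+1) + d)))
          * (stripGF (n'+1) (c+d) d * stripGF (m'+1) (a+b+c+d+1) (b+c+d+1))))))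
    = (X^(2*m'+3) * (I1 (2*m'+2*n'+6) * (I1 (2*m'+n'+4) * (I1 (2*m'+3) * (I1 (m'+1)
          * (Ring.inverse (qqPoch n' * qqPoch (n'+1)) * Ring.inverse (qqPoch m' * qqPoch (m'+1)))))))
        - X^(2*m'+4) * (I1 (2*m'+2*n'+6) * (I1 (2*m'+n'+5) * (I1 (2*m'+3) * (I1 (m'+1)
          * (Ring.inverse (qqPoch n' * qqPoch (n'+1)) * Ring.inverse (qqPoch m' * qqPoch (m'+1))))))))
      - (X^(2*m'+4) * (I1 (2*m'+2*n'+6) * (I1 (2*m'+n'+4) * (I1 (2*m'+3) * (I1 (m'+2)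
          * (Ring.inverse (qqPoch n' * qqPoch (n'+1)) * Ring.inverse (qqPoch m' * qqPoch (m'+1)))))))
        - X^(2*m'+5) * (I1 (2*m'+2*n'+6) * (I1 (2*m'+n'+5) * (I1 (2*m'+3) * (I1 (m'+2)
          * (Ring.inverse (qqPoch n' * qqPoch (n'+1)) * Ring.inverse (qqPoch m' * qqPoch (m'+1)))))))) := by
  have hpt : ∀ a b c d : ℕ,
      X^((a+b+c+d+1) + ((c+d) + ((b+c+d+1) + d)))
          * (stripGF (n'+1) (c+d) d * stripGF (m'+1) (a+b+c+d+1) (b+c+d+1))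
      = (X^((m'+1)*a+(2*m'+3)*b+(2*m'+n'+4)*c+(2*m'+2*n'+6)*d+(2*m'+3))
            * (Ring.inverse (qqPoch n' * qqPoch (n'+1)) * Ring.inverse (qqPoch m' * qqPoch (m'+1)))
          - X^((m'+1)*a+(2*m'+3)*b+(2*m'+n'+5)*c+(2*m'+2*n'+6)*d+(2*m'+4))
            * (Ring.inverse (qqPoch n' * qqPoch (n'+1)) * Ring.inverse (qqPoch m' * qqPoch (m'+1))))
        - (X^((m'+2)*a+(2*m'+3)*b+(2*m'+n'+4)*c+(2*m'+2*n'+6)*d+(2*m'+4))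
            * (Ring.inverse (qqPoch n' * qqPoch (n'+1)) * Ring.inverse (qqPoch m' * qqPoch (m'+1)))
          - X^((m'+2)*a+(2*m'+3)*b+(2*m'+n'+5)*c+(2*m'+2*n'+6)*d+(2*m'+5))
            * (Ring.inverse (qqPoch n' * qqPoch (n'+1)) * Ring.inverse (qqPoch m' * qqPoch (m'+1)))) := by
    intro a b c d
    rw [strip_closed (n'+1) (by omega) (c+d) d (by omega),
      strip_closed (m'+1) (by omega) (a+b+c+d+1) (b+c+d+1) (by omega)]
    rw [(show n'+1-1 = n' from rfl), (show m'+1-1 = m' from rfl)]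
    rw [(show c+d-d+1 = c+1 from by omega), (show a+b+c+d+1-(b+c+d+1)+1 = a+1 from by omega)]
    ring
  rw [psum_congr (fun d => psum_congr (fun c => psum_congr (fun b =>
    psum_congr (fun a => hpt a b c d))))]
  rw [psum4_comb,
    quad (m'+1) (2*m'+3) (2*m'+n'+4) (2*m'+2*n'+6) (2*m'+3) (by omega) (by omega) (by omega) (by omega) _,
    quad (m'+1) (2*m'+3) (2*m'+n'+5) (2*m'+2*n'+6) (2*m'+4) (by omega) (by omega) (by omega) (by omega) _,
    quad (m'+2) (2*m'+3) (2*m'+n'+4) (2*m'+2*n'+6) (2*m'+4) (by omega) (by omega) (by omega) (by omega) _,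
    quad (m'+2) (2*m'+3) (2*m'+n'+5) (2*m'+2*n'+6) (2*m'+5) (by omega) (by omega) (by omega) (by omega) _]
  rfl


lemma isUnit_qqPoch (k : ℕ) : IsUnit (qqPoch k) := by
  rw [PowerSeries.isUnit_iff_constantCoeff, qqPoch, map_prod]
  have h : ∀ i ∈ Finset.range k, constantCoeff (1 - X^(i+1) : PowerSeries ℤ) = 1 := by
    intro i _
    simp [map_sub, map_pow, constantCoeff_X, zero_pow (Nat.succ_ne_zero i)]
  rw [Finset.prod_congr rfl h, Finset.prod_const_one]
  exact isUnit_one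

set_option synthInstance.maxHeartbeats 2000000 in
set_option maxHeartbeats 16000000 in

lemma lhs_term (u1 u2 u3 u4 Pn Pm C Dl : PowerSeries ℤ) (s : ℕ) (hC : IsUnit C)
    (hD : Dl = u1*(u2*(u3*(u4*(Pn*Pm))))*C) :
    X^s * (Ring.inverse u1 * (Ring.inverse u2 * (Ring.inverse u3 * (Ring.inverse u4
      * (Ring.inverse Pn * Ring.inverse Pm)))))
    = (X^s * C) * Ring.inverse Dl := by
  rw [hD]
  simp only [Ring.mul_inverse_rev]
  linear_combination (-(X^s * (Ring.inverse u1 * Ring.inverse u2 * Ring.inverse u3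
    * Ring.inverse u4 * Ring.inverse Pn * Ring.inverse Pm))) * (Ring.inverse_mul_cancel C hC)

lemma rhs_term (N D P C Dl : PowerSeries ℤ) (hC : IsUnit C) (hD : Dl = P * D * C) :
    Ring.inverse P * (N * Ring.inverse D) = (N * C) * Ring.inverse Dl := by
  rw [hD]
  simp only [Ring.mul_inverse_rev]
  linear_combination (-(N * Ring.inverse P * Ring.inverse D)) * (Ring.inverse_mul_cancel C hC)

noncomputable def Dtot (m' n' : ℕ) : PowerSeries ℤ :=
  (1-X^(m'+1))*(1-X^(m'+2))*(1-X^(m'+n'+2))*(1-X^(m'+n'+3))*(1-X^(m'+n'+4))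
    *(1-X^(2*m'+3))*(1-X^(2*m'+n'+4))*(1-X^(2*m'+n'+5))*(1-X^(2*m'+2*n'+6))
    * (qqPoch n' * qqPoch (n'+1) * qqPoch m' * qqPoch (m'+1))

set_option maxHeartbeats 1000000 in
lemma final_alg (m' n' : ℕ) :
    (X^(0:ℕ) * (I1 (2*m'+2*n'+6) * (I1 (2*m'+n'+4) * (I1 (m'+n'+2) * (I1 (m'+1)
          * (Ring.inverse (qqPoch n' * qqPoch (n'+1)) * Ring.inverse (qqPoch m' * qqPoch (m'+1)))))))
        - X^(1:ℕ) * (I1 (2*m'+2*n'+6) * (I1 (2*m'+n'+5) * (I1 (m'+n'+3) * (I1 (m'+1)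
          * (Ring.inverse (qqPoch n' * qqPoch (n'+1)) * Ring.inverse (qqPoch m' * qqPoch (m'+1))))))))
      - (X^(1:ℕ) * (I1 (2*m'+2*n'+6) * (I1 (2*m'+n'+4) * (I1 (m'+n'+3) * (I1 (m'+2)
          * (Ring.inverse (qqPoch n' * qqPoch (n'+1)) * Ring.inverse (qqPoch m' * qqPoch (m'+1)))))))
        - X^(2:ℕ) * (I1 (2*m'+2*n'+6) * (I1 (2*m'+n'+5) * (I1 (m'+n'+4) * (I1 (m'+2)
          * (Ring.inverse (qqPoch n' * qqPoch (n'+1)) * Ring.inverse (qqPoch m' * qqPoch (m'+1))))))))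
    + ((X^(2*m'+3) * (I1 (2*m'+2*n'+6) * (I1 (2*m'+n'+4) * (I1 (2*m'+3) * (I1 (m'+1)
          * (Ring.inverse (qqPoch n' * qqPoch (n'+1)) * Ring.inverse (qqPoch m' * qqPoch (m'+1)))))))
        - X^(2*m'+4) * (I1 (2*m'+2*n'+6) * (I1 (2*m'+n'+5) * (I1 (2*m'+3) * (I1 (m'+1)
          * (Ring.inverse (qqPoch n' * qqPoch (n'+1)) * Ring.inverse (qqPoch m' * qqPoch (m'+1))))))))
      - (X^(2*m'+4) * (I1 (2*m'+2*n'+6) * (I1 (2*m'+n'+4) * (I1 (2*m'+3) * (I1 (m'+2)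
          * (Ring.inverse (qqPoch n' * qqPoch (n'+1)) * Ring.inverse (qqPoch m' * qqPoch (m'+1)))))))
        - X^(2*m'+5) * (I1 (2*m'+2*n'+6) * (I1 (2*m'+n'+5) * (I1 (2*m'+3) * (I1 (m'+2)
          * (Ring.inverse (qqPoch n' * qqPoch (n'+1)) * Ring.inverse (qqPoch m' * qqPoch (m'+1)))))))))
    = Ring.inverse (qqPoch (n'+1) * qqPoch (n'+1-1) * qqPoch (m'+1) * qqPoch (m'+1-1)) *
        (((1 - X ^ (3 * (m'+1) + (n'+1) + 1)) * (1 - X ^ ((m'+1) + 1)) * (1 - X ^ ((m'+1) + (n'+1) + 1))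
            - X * (1 - X ^ (3 * (m'+1) + (n'+1) + 2)) * (1 - X ^ (m'+1)) * (1 - X ^ ((m'+1) + (n'+1)))) *
          Ring.inverse ((1 - X ^ (m'+1)) * (1 - X ^ ((m'+1) + 1)) * (1 - X ^ ((m'+1) + (n'+1)))
            * (1 - X ^ ((m'+1) + (n'+1) + 1)) * (1 - X ^ (2 * (m'+1) + 1)) * (1 - X ^ (2 * (m'+1) + (n'+1) + 1))
            * (1 - X ^ (2 * (m'+1) + 2 * (n'+1) + 2)))
        + (X ^ 2 * (1 - X ^ (3 * (m'+1) + (n'+1) + 3)) * (1 - X ^ (m'+1)) * (1 - X ^ ((m'+1) + (n'+1) + 1))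
            - X * (1 - X ^ (3 * (m'+1) + (n'+1) + 2)) * (1 - X ^ ((m'+1) + 1)) * (1 - X ^ ((m'+1) + (n'+1) + 2))) *
          Ring.inverse ((1 - X ^ (m'+1)) * (1 - X ^ ((m'+1) + 1)) * (1 - X ^ ((m'+1) + (n'+1) + 1))
            * (1 - X ^ ((m'+1) + (n'+1) + 2)) * (1 - X ^ (2 * (m'+1) + 1)) * (1 - X ^ (2 * (m'+1) + (n'+1) + 2))
            * (1 - X ^ (2 * (m'+1) + 2 * (n'+1) + 2)))) := by
  rw [(show n'+1-1 = n' from rfl), (show m'+1-1 = m' from rfl)]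
  simp only [I1]
  rw [mul_add]
  rw [lhs_term (1-X^(2*m'+2*n'+6)) (1-X^(2*m'+n'+4)) (1-X^(m'+n'+2)) (1-X^(m'+1))
    (qqPoch n' * qqPoch (n'+1)) (qqPoch m' * qqPoch (m'+1))
    ((1-X^(m'+2))*(1-X^(m'+n'+3))*(1-X^(m'+n'+4))*(1-X^(2*m'+3))*(1-X^(2*m'+n'+5))) (Dtot m' n') (0)
    (((((isUnit_one_sub_X_pow _ (by omega)).mul (isUnit_one_sub_X_pow _ (by omega))).mul (isUnit_one_sub_X_pow _ (by omega))).mul (isUnit_one_sub_X_pow _ (by omega))).mul (isUnit_one_sub_X_pow _ (by omega)))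
    (by unfold Dtot; ring)]
  rw [lhs_term (1-X^(2*m'+2*n'+6)) (1-X^(2*m'+n'+5)) (1-X^(m'+n'+3)) (1-X^(m'+1))
    (qqPoch n' * qqPoch (n'+1)) (qqPoch m' * qqPoch (m'+1))
    ((1-X^(m'+2))*(1-X^(m'+n'+2))*(1-X^(m'+n'+4))*(1-X^(2*m'+3))*(1-X^(2*m'+n'+4))) (Dtot m' n') (1)
    (((((isUnit_one_sub_X_pow _ (by omega)).mul (isUnit_one_sub_X_pow _ (by omega))).mul (isUnit_one_sub_X_pow _ (by omega))).mul (isUnit_one_sub_X_pow _ (by omega))).mul (isUnit_one_sub_X_pow _ (by omega)))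
    (by unfold Dtot; ring)]
  rw [lhs_term (1-X^(2*m'+2*n'+6)) (1-X^(2*m'+n'+4)) (1-X^(m'+n'+3)) (1-X^(m'+2))
    (qqPoch n' * qqPoch (n'+1)) (qqPoch m' * qqPoch (m'+1))
    ((1-X^(m'+1))*(1-X^(m'+n'+2))*(1-X^(m'+n'+4))*(1-X^(2*m'+3))*(1-X^(2*m'+n'+5))) (Dtot m' n') (1)
    (((((isUnit_one_sub_X_pow _ (by omega)).mul (isUnit_one_sub_X_pow _ (by omega))).mul (isUnit_one_sub_X_pow _ (by omega))).mul (isUnit_one_sub_X_pow _ (by omega))).mul (isUnit_one_sub_X_pow _ (by omega)))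
    (by unfold Dtot; ring)]
  rw [lhs_term (1-X^(2*m'+2*n'+6)) (1-X^(2*m'+n'+5)) (1-X^(m'+n'+4)) (1-X^(m'+2))
    (qqPoch n' * qqPoch (n'+1)) (qqPoch m' * qqPoch (m'+1))
    ((1-X^(m'+1))*(1-X^(m'+n'+2))*(1-X^(m'+n'+3))*(1-X^(2*m'+3))*(1-X^(2*m'+n'+4))) (Dtot m' n') (2)
    (((((isUnit_one_sub_X_pow _ (by omega)).mul (isUnit_one_sub_X_pow _ (by omega))).mul (isUnit_one_sub_X_pow _ (by omega))).mul (isUnit_one_sub_X_pow _ (by omega))).mul (isUnit_one_sub_X_pow _ (by omega)))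
    (by unfold Dtot; ring)]
  rw [lhs_term (1-X^(2*m'+2*n'+6)) (1-X^(2*m'+n'+4)) (1-X^(2*m'+3)) (1-X^(m'+1))
    (qqPoch n' * qqPoch (n'+1)) (qqPoch m' * qqPoch (m'+1))
    ((1-X^(m'+2))*(1-X^(m'+n'+2))*(1-X^(m'+n'+3))*(1-X^(m'+n'+4))*(1-X^(2*m'+n'+5))) (Dtot m' n') (2*m'+3)
    (((((isUnit_one_sub_X_pow _ (by omega)).mul (isUnit_one_sub_X_pow _ (by omega))).mul (isUnit_one_sub_X_pow _ (by omega))).mul (isUnit_one_sub_X_pow _ (by omega))).mul (isUnit_one_sub_X_pow _ (by omega)))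
    (by unfold Dtot; ring)]
  rw [lhs_term (1-X^(2*m'+2*n'+6)) (1-X^(2*m'+n'+5)) (1-X^(2*m'+3)) (1-X^(m'+1))
    (qqPoch n' * qqPoch (n'+1)) (qqPoch m' * qqPoch (m'+1))
    ((1-X^(m'+2))*(1-X^(m'+n'+2))*(1-X^(m'+n'+3))*(1-X^(m'+n'+4))*(1-X^(2*m'+n'+4))) (Dtot m' n') (2*m'+4)
    (((((isUnit_one_sub_X_pow _ (by omega)).mul (isUnit_one_sub_X_pow _ (by omega))).mul (isUnit_one_sub_X_pow _ (by omega))).mul (isUnit_one_sub_X_pow _ (by omega))).mul (isUnit_one_sub_X_pow _ (by omega)))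
    (by unfold Dtot; ring)]
  rw [lhs_term (1-X^(2*m'+2*n'+6)) (1-X^(2*m'+n'+4)) (1-X^(2*m'+3)) (1-X^(m'+2))
    (qqPoch n' * qqPoch (n'+1)) (qqPoch m' * qqPoch (m'+1))
    ((1-X^(m'+1))*(1-X^(m'+n'+2))*(1-X^(m'+n'+3))*(1-X^(m'+n'+4))*(1-X^(2*m'+n'+5))) (Dtot m' n') (2*m'+4)
    (((((isUnit_one_sub_X_pow _ (by omega)).mul (isUnit_one_sub_X_pow _ (by omega))).mul (isUnit_one_sub_X_pow _ (by omega))).mul (isUnit_one_sub_X_pow _ (by omega))).mul (isUnit_one_sub_X_pow _ (by omega)))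
    (by unfold Dtot; ring)]
  rw [lhs_term (1-X^(2*m'+2*n'+6)) (1-X^(2*m'+n'+5)) (1-X^(2*m'+3)) (1-X^(m'+2))
    (qqPoch n' * qqPoch (n'+1)) (qqPoch m' * qqPoch (m'+1))
    ((1-X^(m'+1))*(1-X^(m'+n'+2))*(1-X^(m'+n'+3))*(1-X^(m'+n'+4))*(1-X^(2*m'+n'+4))) (Dtot m' n') (2*m'+5)
    (((((isUnit_one_sub_X_pow _ (by omega)).mul (isUnit_one_sub_X_pow _ (by omega))).mul (isUnit_one_sub_X_pow _ (by omega))).mul (isUnit_one_sub_X_pow _ (by omega))).mul (isUnit_one_sub_X_pow _ (by omega)))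
    (by unfold Dtot; ring)]
  rw [rhs_term ((1 - X ^ (3 * (m'+1) + (n'+1) + 1)) * (1 - X ^ ((m'+1) + 1)) * (1 - X ^ ((m'+1) + (n'+1) + 1)) - X * (1 - X ^ (3 * (m'+1) + (n'+1) + 2)) * (1 - X ^ (m'+1)) * (1 - X ^ ((m'+1) + (n'+1))))
    ((1 - X ^ (m'+1)) * (1 - X ^ ((m'+1) + 1)) * (1 - X ^ ((m'+1) + (n'+1))) * (1 - X ^ ((m'+1) + (n'+1) + 1)) * (1 - X ^ (2 * (m'+1) + 1)) * (1 - X ^ (2 * (m'+1) + (n'+1) + 1)) * (1 - X ^ (2 * (m'+1) + 2 * (n'+1) + 2)))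
    (qqPoch (n'+1) * qqPoch n' * qqPoch (m'+1) * qqPoch m')
    ((1-X^(m'+n'+4))*(1-X^(2*m'+n'+5))) (Dtot m' n')
    ((isUnit_one_sub_X_pow _ (by omega)).mul (isUnit_one_sub_X_pow _ (by omega)))
    (by unfold Dtot; ring)]
  rw [rhs_term (X ^ 2 * (1 - X ^ (3 * (m'+1) + (n'+1) + 3)) * (1 - X ^ (m'+1)) * (1 - X ^ ((m'+1) + (n'+1) + 1)) - X * (1 - X ^ (3 * (m'+1) + (n'+1) + 2)) * (1 - X ^ ((m'+1) + 1)) * (1 - X ^ ((m'+1) + (n'+1) + 2)))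
    ((1 - X ^ (m'+1)) * (1 - X ^ ((m'+1) + 1)) * (1 - X ^ ((m'+1) + (n'+1) + 1)) * (1 - X ^ ((m'+1) + (n'+1) + 2)) * (1 - X ^ (2 * (m'+1) + 1)) * (1 - X ^ (2 * (m'+1) + (n'+1) + 2)) * (1 - X ^ (2 * (m'+1) + 2 * (n'+1) + 2)))
    (qqPoch (n'+1) * qqPoch n' * qqPoch (m'+1) * qqPoch m')
    ((1-X^(m'+n'+2))*(1-X^(2*m'+n'+4))) (Dtot m' n')
    ((isUnit_one_sub_X_pow _ (by omega)).mul (isUnit_one_sub_X_pow _ (by omega)))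
    (by unfold Dtot; ring)]
  ring


end


/-- `G = ((q;q)_n (q;q)_{n-1} (q;q)_m (q;q)_{m-1})⁻¹ (T₁ + T₂)`, where `G`
counts the P-partitions of the poset `P₈` (the diamond with a two-rowed strip of length `n`
inserted between `u₂` and `u₄`, and one of length `m` inserted between `u₁` and `u₃`).
The tuple is `τ = (u, A, E, C, D)` with `u 0 = u₁, …, u 3 = u₄`, all chains 0-indexed. -/
theorem stmt_17 (m n : ℕ) (hm : 1 ≤ m) (hn : 1 ≤ n)
    (G : PowerSeries ℤ)
    (hG : G = PowerSeries.mk fun N =>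
      (Nat.card {τ : (Fin 4 → ℕ) × (Fin (n - 1) → ℕ) × (Fin n → ℕ)
          × (Fin (m - 1) → ℕ) × (Fin m → ℕ) //
        τ.1 1 ≤ τ.1 0 ∧ τ.1 2 ≤ τ.1 0 ∧ τ.1 3 ≤ τ.1 1 ∧ τ.1 3 ≤ τ.1 2 ∧
        -- `A_{n-1} ≥ ⋯ ≥ A₁ ≥ u₂`:
        Monotone τ.2.1 ∧ (∀ h : 0 < n - 1, τ.1 1 ≤ τ.2.1 ⟨0, h⟩) ∧
        -- `Eₙ ≥ ⋯ ≥ E₁ ≥ u₄`: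
        Monotone τ.2.2.1 ∧ (∀ h : 0 < n, τ.1 3 ≤ τ.2.2.1 ⟨0, h⟩) ∧
        -- `u₂ ≥ E₁`:
        (∀ h : 0 < n, τ.2.2.1 ⟨0, h⟩ ≤ τ.1 1) ∧
        -- `A_t ≥ E_{t+1}`:
        (∀ t : Fin (n - 1), τ.2.2.1 ⟨(t : ℕ) + 1, by have := t.isLt; omega⟩ ≤ τ.2.1 t) ∧
        -- `C_{m-1} ≥ ⋯ ≥ C₁ ≥ u₁`:
        Monotone τ.2.2.2.1 ∧ (∀ h : 0 < m - 1, τ.1 0 ≤ τ.2.2.2.1 ⟨0, h⟩) ∧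
        -- `D_m ≥ ⋯ ≥ D₁ ≥ u₃`:
        Monotone τ.2.2.2.2 ∧ (∀ h : 0 < m, τ.1 2 ≤ τ.2.2.2.2 ⟨0, h⟩) ∧
        -- `u₁ ≥ D₁`:
        (∀ h : 0 < m, τ.2.2.2.2 ⟨0, h⟩ ≤ τ.1 0) ∧
        -- `C_t ≥ D_{t+1}`:
        (∀ t : Fin (m - 1), τ.2.2.2.2 ⟨(t : ℕ) + 1, by have := t.isLt; omega⟩ ≤ τ.2.2.2.1 t) ∧
        (∑ i, τ.1 i) + (∑ t, τ.2.1 t) + (∑ t, τ.2.2.1 t) + (∑ t, τ.2.2.2.1 t)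
          + (∑ t, τ.2.2.2.2 t) = N} : ℤ)) :
    G = Ring.inverse (qqPoch n * qqPoch (n - 1) * qqPoch m * qqPoch (m - 1)) *
        (((1 - X ^ (3 * m + n + 1)) * (1 - X ^ (m + 1)) * (1 - X ^ (m + n + 1))
            - X * (1 - X ^ (3 * m + n + 2)) * (1 - X ^ m) * (1 - X ^ (m + n))) *
          Ring.inverse ((1 - X ^ m) * (1 - X ^ (m + 1)) * (1 - X ^ (m + n))
            * (1 - X ^ (m + n + 1)) * (1 - X ^ (2 * m + 1)) * (1 - X ^ (2 * m + n + 1))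
            * (1 - X ^ (2 * m + 2 * n + 2)))
        + (X ^ 2 * (1 - X ^ (3 * m + n + 3)) * (1 - X ^ m) * (1 - X ^ (m + n + 1))
            - X * (1 - X ^ (3 * m + n + 2)) * (1 - X ^ (m + 1)) * (1 - X ^ (m + n + 2))) *
          Ring.inverse ((1 - X ^ m) * (1 - X ^ (m + 1)) * (1 - X ^ (m + n + 1))
            * (1 - X ^ (m + n + 2)) * (1 - X ^ (2 * m + 1)) * (1 - X ^ (2 * m + n + 2))
            * (1 - X ^ (2 * m + 2 * n + 2)))) := by
  obtain ⟨m', rfl⟩ : ∃ m', m = m' + 1 := ⟨m - 1, by omega⟩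
  obtain ⟨n', rfl⟩ : ∃ n', n = n' + 1 := ⟨n - 1, by omega⟩
  have hGg : G = gcnt (BigP (m'+1) (n'+1)) (bigW (m'+1) (n'+1)) := by
    rw [hG]
    ext N
    rw [coeff_mk, gcnt_coeff]
    congr 1
    apply Nat.card_congr
    apply Equiv.subtypeEquivRight
    intro τ
    constructor
    · rintro ⟨h1,h2,h3,h4,h5,h6,h7,h8,h9,h10,h11,h12,h13,h14,h15,h16,h17⟩
      refine ⟨⟨⟨h1,h2,h3,h4⟩, ⟨h5,h6,h7,h8,h9,h10⟩, ⟨h11,h12,h13,h14,h15,h16⟩⟩, ?_⟩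
      unfold bigW stripW
      dsimp only
      omega
    · rintro ⟨⟨⟨h1,h2,h3,h4⟩, ⟨h5,h6,h7,h8,h9,h10⟩, ⟨h11,h12,h13,h14,h15,h16⟩⟩, hw⟩
      unfold bigW stripW at hw
      dsimp only at hw
      exact ⟨h1,h2,h3,h4,h5,h6,h7,h8,h9,h10,h11,h12,h13,h14,h15,h16, by omega⟩
  rw [hGg, gcnt_split _ (fun τ => τ.1 2 ≤ τ.1 1) _ (big_fin _ _ _),
    case1 (m'+1) (n'+1) (by omega) (by omega), case2 (m'+1) (n'+1) (by omega) (by omega),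
    case1_closed, case2_closed]
  exact final_alg m' n'
end
end
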